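/- arXiv:2103.12021 — 11 statements merged into one kernel-verified Lean document; each statement's English description precedes it below -/
import Mathlib

section
/- Let n ~ Binomial(N, p). For every integer k ≥ 0 there exists a constant c_k depending only on k (one may take c_k = 1 + k·2^{k+1} + k^{k+1} + k·(16(k+1)/e)^{k+1}) such that E[ 1/(max(n,1))^k ] ≤ c_k / (N p)^k. -/
open Finset

-- (n+k)! ≤ (k+1)^k * n^k * n!  for n ≥ 1
lemma aux_fact (n k : ℕ) (hn : 1 ≤ n) :
    (n + k).factorial ≤ (k+1)^k * n^k * n.factorial := by
  induction k with
  | zero => simp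
  | succ k ih =>
    have h1 : (n + (k+1)).factorial = (n + k + 1) * (n + k).factorial := by
      rw [← Nat.add_assoc]; exact Nat.factorial_succ _
    rw [h1]
    calc (n + k + 1) * (n + k).factorial
        ≤ ((k+2)*n) * ((k+1)^k * n^k * n.factorial) := by
          apply Nat.mul_le_mul _ ih; nlinarith
      _ ≤ (k+1+1)^(k+1) * n^(k+1) * n.factorial := by
          have : (k+1)^k ≤ (k+2)^k := Nat.pow_le_pow_left (by omega) k
          calc ((k+2)*n) * ((k+1)^k * n^k * n.factorial)
              = (k+2) * (k+1)^k * (n^(k+1)) * n.factorial := by ring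
            _ ≤ (k+2) * (k+2)^k * (n^(k+1)) * n.factorial := by
                exact Nat.mul_le_mul_right _ (Nat.mul_le_mul_right _ (Nat.mul_le_mul_left _ this))
            _ = (k+1+1)^(k+1) * n^(k+1) * n.factorial := by ring

lemma aux_fact_max (n k : ℕ) :
    (n + k).factorial ≤ (k+1)^k * (max n 1)^k * n.factorial := by
  rcases Nat.eq_zero_or_pos n with h | h
  · subst h
    have hm : max 0 1 = 1 := rfl
    rw [hm]
    simpa using le_trans (Nat.factorial_le_pow k) (Nat.pow_le_pow_left (by omega) k)
  · have := aux_fact n k h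
    rwa [Nat.max_eq_left h]

lemma aux_choose (N n k : ℕ) (h : n ≤ N) :
    N.choose n * n.factorial * (N+k).factorial
      = (N+k).choose (n+k) * N.factorial * (n+k).factorial := by
  have hk : n + k ≤ N + k := by omega
  have h1 := Nat.choose_mul_factorial_mul_factorial h
  have h2 := Nat.choose_mul_factorial_mul_factorial hk
  have hs : N + k - (n + k) = N - n := by omega
  rw [hs] at h2
  apply Nat.eq_of_mul_eq_mul_right (Nat.factorial_pos (N - n))
  calc N.choose n * n.factorial * (N+k).factorial * (N-n).factorial
      = (N.choose n * n.factorial * (N-n).factorial) * (N+k).factorial := by ring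
    _ = N.factorial * (N+k).factorial := by rw [h1]
    _ = ((N+k).choose (n+k) * (n+k).factorial * (N-n).factorial) * N.factorial := by rw [h2]; ring
    _ = (N+k).choose (n+k) * N.factorial * (n+k).factorial * (N-n).factorial := by ring

/-- Bound on binomial inverse moments: if `n ∼ Binomial(N, p)` then for every `k`,
`E[1 / (max(n,1))^k] ≤ c_k / (N p)^k` with
`c_k = 1 + k 2^{k+1} + k^{k+1} + k (16(k+1)/e)^{k+1}`. -/
theorem binomial_inverse_moment
    (N : ℕ) (hN : 0 < N) (p : ℝ) (hp0 : 0 < p) (hp1 : p ≤ 1) (k : ℕ) :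
    ∑ n ∈ range (N + 1),
        (N.choose n : ℝ) * p ^ n * (1 - p) ^ (N - n) * (1 / ((max n 1 : ℕ) : ℝ) ^ k)
      ≤ (1 + (k : ℝ) * 2 ^ (k + 1) + (k : ℝ) ^ (k + 1)
           + (k : ℝ) * (16 * ((k : ℝ) + 1) / Real.exp 1) ^ (k + 1))
        / ((N : ℝ) * p) ^ k := by
  have hq : (0:ℝ) ≤ 1 - p := by linarith
  have hNp : (0:ℝ) < (N:ℝ) * p := by positivity
  -- Step 1: pointwise bound to key sum
  have key : ∑ n ∈ range (N + 1),
      (N.choose n : ℝ) * p ^ n * (1 - p) ^ (N - n) * (1 / ((max n 1 : ℕ) : ℝ) ^ k)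
      ≤ ((k:ℝ)+1)^k / ((N:ℝ) * p)^k := by
    have step1 : ∀ n ∈ range (N+1),
        (N.choose n : ℝ) * p ^ n * (1 - p) ^ (N - n) * (1 / ((max n 1 : ℕ) : ℝ) ^ k)
        ≤ ((k:ℝ)+1)^k * ((N.factorial : ℝ) / ((N+k).factorial : ℝ))
            * (((N+k).choose (n+k) : ℝ) * p ^ n * (1 - p) ^ (N - n)) := by
      intro n hn
      have hnN : n ≤ N := by simpa [Nat.lt_succ_iff] using mem_range.mp hn
      have hmax : (0:ℝ) < ((max n 1 : ℕ) : ℝ) := by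
        have : 1 ≤ max n 1 := le_max_right n 1
        exact_mod_cast Nat.lt_of_lt_of_le Nat.zero_lt_one this
      -- 1 / max^k ≤ (k+1)^k * n! / (n+k)!
      have hA : (1:ℝ) / ((max n 1 : ℕ) : ℝ) ^ k
          ≤ ((k:ℝ)+1)^k * (n.factorial : ℝ) / ((n+k).factorial : ℝ) := by
        rw [div_le_div_iff₀ (by positivity) (by positivity), one_mul]
        have h := aux_fact_max n k
        calc ((n+k).factorial : ℝ) ≤ (((k+1)^k * (max n 1)^k * n.factorial : ℕ) : ℝ) := by
              exact_mod_cast h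
          _ = ((k:ℝ)+1)^k * (((max n 1 : ℕ)) : ℝ)^k * (n.factorial : ℝ) := by push_cast; ring
          _ = ((k:ℝ)+1)^k * (n.factorial : ℝ) * ((max n 1 : ℕ):ℝ)^k := by ring
      -- choose identity
      have hB : (N.choose n : ℝ) * ((k:ℝ)+1)^k * (n.factorial : ℝ) / ((n+k).factorial : ℝ)
          = ((k:ℝ)+1)^k * ((N.factorial : ℝ) / ((N+k).factorial : ℝ)) * ((N+k).choose (n+k) : ℝ) := by
        have h := aux_choose N n k hnN
        have h' : (N.choose n : ℝ) * (n.factorial : ℝ) * ((N+k).factorial : ℝ)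
            = ((N+k).choose (n+k) : ℝ) * (N.factorial : ℝ) * ((n+k).factorial : ℝ) := by
          exact_mod_cast h
        have hnk : ((n+k).factorial : ℝ) ≠ 0 := by positivity
        have hNk : ((N+k).factorial : ℝ) ≠ 0 := by positivity
        field_simp
        linear_combination h'
      have hnn : (0:ℝ) ≤ (N.choose n : ℝ) * p ^ n * (1 - p) ^ (N - n) := by positivity
      calc (N.choose n : ℝ) * p ^ n * (1 - p) ^ (N - n) * (1 / ((max n 1 : ℕ) : ℝ) ^ k)
          ≤ (N.choose n : ℝ) * p ^ n * (1 - p) ^ (N - n)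
              * (((k:ℝ)+1)^k * (n.factorial : ℝ) / ((n+k).factorial : ℝ)) :=
            mul_le_mul_of_nonneg_left hA hnn
        _ = ((N.choose n : ℝ) * ((k:ℝ)+1)^k * (n.factorial : ℝ) / ((n+k).factorial : ℝ))
              * (p ^ n * (1 - p) ^ (N - n)) := by ring
        _ = (((k:ℝ)+1)^k * ((N.factorial : ℝ) / ((N+k).factorial : ℝ)) * ((N+k).choose (n+k) : ℝ))
              * (p ^ n * (1 - p) ^ (N - n)) := by rw [hB]
        _ = ((k:ℝ)+1)^k * ((N.factorial : ℝ) / ((N+k).factorial : ℝ))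
              * (((N+k).choose (n+k) : ℝ) * p ^ n * (1 - p) ^ (N - n)) := by ring
    -- sum of shifted binomial terms ≤ 1/p^k
    have hsum : ∑ n ∈ range (N+1), ((N+k).choose (n+k) : ℝ) * p ^ n * (1 - p) ^ (N - n)
        ≤ 1 / p^k := by
      rw [le_div_iff₀ (by positivity)]
      have hbin : ∑ m ∈ range (N+k+1), p ^ m * (1-p) ^ (N+k-m) * ((N+k).choose m : ℝ) = 1 := by
        rw [← add_pow]
        norm_num
      have hsplit := Finset.sum_range_add (fun m => p ^ m * (1-p) ^ (N+k-m) * ((N+k).choose m : ℝ)) k (N+1)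
      have hrange : k + (N+1) = N+k+1 := by omega
      rw [hrange, hbin] at hsplit
      have hfirst : (0:ℝ) ≤ ∑ m ∈ range k, p ^ m * (1-p) ^ (N+k-m) * ((N+k).choose m : ℝ) := by
        apply Finset.sum_nonneg; intro i _; positivity
      have heq : ∑ n ∈ range (N+1), p ^ (k+n) * (1-p) ^ (N+k-(k+n)) * ((N+k).choose (k+n) : ℝ)
          = (∑ n ∈ range (N+1), ((N+k).choose (n+k) : ℝ) * p ^ n * (1 - p) ^ (N - n)) * p^k := by
        rw [Finset.sum_mul]
        apply Finset.sum_congr rfl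
        intro n hn
        have h1 : N + k - (k + n) = N - n := by omega
        have h2 : k + n = n + k := by omega
        rw [h1, h2, pow_add]
        ring
      rw [heq] at hsplit
      linarith
    calc ∑ n ∈ range (N + 1),
        (N.choose n : ℝ) * p ^ n * (1 - p) ^ (N - n) * (1 / ((max n 1 : ℕ) : ℝ) ^ k)
        ≤ ∑ n ∈ range (N+1), ((k:ℝ)+1)^k * ((N.factorial : ℝ) / ((N+k).factorial : ℝ))
            * (((N+k).choose (n+k) : ℝ) * p ^ n * (1 - p) ^ (N - n)) :=
          Finset.sum_le_sum step1
      _ = ((k:ℝ)+1)^k * ((N.factorial : ℝ) / ((N+k).factorial : ℝ))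
            * ∑ n ∈ range (N+1), ((N+k).choose (n+k) : ℝ) * p ^ n * (1 - p) ^ (N - n) := by
          rw [Finset.mul_sum]
      _ ≤ ((k:ℝ)+1)^k * ((N.factorial : ℝ) / ((N+k).factorial : ℝ)) * (1 / p^k) := by
          apply mul_le_mul_of_nonneg_left hsum; positivity
      _ ≤ ((k:ℝ)+1)^k / ((N:ℝ) * p)^k := by
          -- N! / (N+k)! ≤ 1 / N^k
          have hfac : (N.factorial : ℝ) * (N:ℝ)^k ≤ ((N+k).factorial : ℝ) := by
            have h1 : N.factorial * N ^ k ≤ N.factorial * (N+1)^k :=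
              Nat.mul_le_mul_left _ (Nat.pow_le_pow_left (by omega) k)
            have h2 : N.factorial * (N+1)^k ≤ (N+k).factorial := Nat.factorial_mul_pow_le_factorial
            exact_mod_cast le_trans h1 h2
          have hNk : (0:ℝ) < ((N+k).factorial : ℝ) := by positivity
          have hdiv : (N.factorial : ℝ) / ((N+k).factorial : ℝ) ≤ 1 / (N:ℝ)^k := by
            rw [div_le_div_iff₀ hNk (by positivity)]
            linarith
          calc ((k:ℝ)+1)^k * ((N.factorial : ℝ) / ((N+k).factorial : ℝ)) * (1 / p^k)
              ≤ ((k:ℝ)+1)^k * (1 / (N:ℝ)^k) * (1 / p^k) := by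
                apply mul_le_mul_of_nonneg_right _ (by positivity)
                apply mul_le_mul_of_nonneg_left hdiv (by positivity)
            _ = ((k:ℝ)+1)^k / ((N:ℝ) * p)^k := by
                rw [mul_pow]; field_simp
  -- Step 2: constant comparison
  have hconst : ((k:ℝ)+1)^k ≤ 1 + (k : ℝ) * 2 ^ (k + 1) + (k : ℝ) ^ (k + 1)
      + (k : ℝ) * (16 * ((k : ℝ) + 1) / Real.exp 1) ^ (k + 1) := by
    rcases Nat.eq_zero_or_pos k with h | h
    · subst h; norm_num
    · have hk1 : (1:ℝ) ≤ (k:ℝ) := by exact_mod_cast h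
      have he : Real.exp 1 ≤ 16 := by
        have := Real.exp_one_lt_d9; norm_num at this ⊢; linarith
      have hepos : 0 < Real.exp 1 := Real.exp_pos 1
      have hbase : (k:ℝ)+1 ≤ 16 * ((k : ℝ) + 1) / Real.exp 1 := by
        rw [le_div_iff₀ hepos]
        nlinarith
      have h1 : ((k:ℝ)+1)^k ≤ ((k:ℝ)+1)^(k+1) := by
        apply pow_le_pow_right₀ (by linarith) (by omega)
      have h2 : ((k:ℝ)+1)^(k+1) ≤ (16 * ((k : ℝ) + 1) / Real.exp 1) ^ (k + 1) :=
        pow_le_pow_left₀ (by linarith) hbase (k+1)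
      have h3 : (16 * ((k : ℝ) + 1) / Real.exp 1) ^ (k + 1)
          ≤ (k : ℝ) * (16 * ((k : ℝ) + 1) / Real.exp 1) ^ (k + 1) := by
        nlinarith [pow_nonneg (le_trans (by linarith : (0:ℝ) ≤ (k:ℝ)+1) hbase) (k+1)]
      have h4 : (0:ℝ) ≤ 1 + (k : ℝ) * 2 ^ (k + 1) + (k : ℝ) ^ (k + 1) := by positivity
      linarith
  calc ∑ n ∈ range (N + 1),
      (N.choose n : ℝ) * p ^ n * (1 - p) ^ (N - n) * (1 / ((max n 1 : ℕ) : ℝ) ^ k)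
      ≤ ((k:ℝ)+1)^k / ((N:ℝ) * p)^k := key
    _ ≤ _ := by gcongr
end

section
/- Consider a multi-armed bandit with 1/μ(a*) ≤ C* for some C* ∈ [1,2), where a* is the optimal arm. Let â be the most played arm in a dataset of N i.i.d. samples with actions drawn from μ, i.e., â = argmax_a N(a). Then E[r(a*) − r(â)] ≤ exp( −N · KL( Bern(1/2) ‖ Bern(1/C*) ) ). -/
open MeasureTheory ProbabilityTheory Finset

/-- The Kullback–Leibler divergence between `Bern(p)` and `Bern(q)`. -/
noncomputable def klBern (p q : ℝ) : ℝ :=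
  p * Real.log (p / q) + (1 - p) * Real.log ((1 - p) / (1 - q))

/-- Sub-optimality of the most played arm in offline multi-armed bandits: if the
optimal arm `a*` satisfies `μ(a*) ≥ 1/C*` for some `C* ∈ [1,2)` and `â` is the most
played arm among `N` i.i.d. samples with action marginal `μ`, then
`E[r(a*) - r(â)] ≤ exp(-N · KL(Bern(1/2) ‖ Bern(1/C*)))`. -/
theorem most_played_arm_suboptimality
    {Ω : Type*} [MeasurableSpace Ω] (Pr : Measure Ω) [IsProbabilityMeasure Pr]
    {A : Type*} [Fintype A] [DecidableEq A]
    [MeasurableSpace A] [MeasurableSingletonClass A]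
    (N : ℕ)
    (act : Fin N → Ω → A) (hmeas : ∀ i, Measurable (act i))
    (hindep : iIndepFun act Pr)
    (μ : A → ℝ) (hμ0 : ∀ a, 0 ≤ μ a) (hμ1 : ∑ a, μ a = 1)
    (hdist : ∀ i a, Pr {ω | act i ω = a} = ENNReal.ofReal (μ a))
    (r : A → ℝ) (hr : ∀ a, r a ∈ Set.Icc (0 : ℝ) 1)
    (astar : A) (hopt : ∀ a, r a ≤ r astar)
    (C : ℝ) (hC1 : 1 ≤ C) (hC2 : C < 2)
    (hcov : 1 / C ≤ μ astar)
    (cnt : A → Ω → ℕ)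
    (hcnt : ∀ a ω, cnt a ω = ((univ : Finset (Fin N)).filter
      (fun i => act i ω = a)).card)
    (hatA : Ω → A) (hatAmeas : Measurable hatA)
    (hmost : ∀ ω a, cnt a ω ≤ cnt (hatA ω) ω) :
    ∫ ω, (r astar - r (hatA ω)) ∂Pr
      ≤ Real.exp (-(N : ℝ) * klBern (1 / 2) (1 / C)) := by
  classical
  have hC0 : (0 : ℝ) < C := lt_of_lt_of_le one_pos hC1
  -- the integrand, its measurability and integrability
  have hfmeas : Measurable (fun ω => r astar - r (hatA ω)) :=
    (measurable_of_countable (fun a => r astar - r a)).comp hatAmeas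
  have hfbound : ∀ ω, r astar - r (hatA ω) ≤ 1 := by
    intro ω
    have h1 := (hr astar).2
    have h2 := (hr (hatA ω)).1
    linarith
  have hfnonneg : ∀ ω, 0 ≤ r astar - r (hatA ω) := fun ω => sub_nonneg.mpr (hopt _)
  have hfint : Integrable (fun ω => r astar - r (hatA ω)) Pr := by
    refine (integrable_const (1 : ℝ)).mono' hfmeas.aestronglyMeasurable ?_
    refine Filter.Eventually.of_forall fun ω => ?_
    rw [Real.norm_eq_abs, abs_of_nonneg (hfnonneg ω)]
    exact hfbound ω
  rcases eq_or_lt_of_le hC1 with hC | hC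
  · -- trivial case C = 1 : the bound is at least 1
    have h1 : ∫ ω, (r astar - r (hatA ω)) ∂Pr ≤ 1 := by
      calc ∫ ω, (r astar - r (hatA ω)) ∂Pr ≤ ∫ _ω, (1 : ℝ) ∂Pr :=
            integral_mono hfint (integrable_const 1) hfbound
        _ = 1 := by simp
    refine h1.trans (Real.one_le_exp ?_)
    have : klBern (1 / 2) (1 / C) = (1 / 2) * Real.log (1 / 2) := by
      rw [← hC]
      simp [klBern]
    rw [this]
    have hlog : Real.log (1 / 2) ≤ 0 := Real.log_nonpos (by norm_num) (by norm_num)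
    have : (0:ℝ) ≤ N := Nat.cast_nonneg N
    nlinarith
  -- main case: 1 < C < 2, so q := 1/C ∈ (1/2, 1)
  set q : ℝ := 1 / C with hqdef
  have hq1 : q < 1 := by rw [hqdef]; rw [div_lt_one hC0]; exact hC
  have hqhalf : (1:ℝ)/2 < q := by
    rw [hqdef]
    rw [div_lt_div_iff₀ (by norm_num) hC0]
    linarith
  have hq0 : 0 < q := lt_trans (by norm_num) hqhalf
  have h1q : 0 < 1 - q := by linarith
  set ρ : ℝ := (1 - q) / q with hρdef
  have hρ0 : 0 < ρ := div_pos h1q hq0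
  have hρ1 : ρ < 1 := by
    rw [hρdef, div_lt_one hq0]; linarith
  set t : ℝ := Real.log ρ with htdef
  have ht0 : t ≤ 0 := le_of_lt (Real.log_neg hρ0 hρ1)
  have hexpt : Real.exp t = ρ := Real.exp_log hρ0
  -- the indicator variables
  set X : Fin N → Ω → ℝ := fun i ω => if act i ω = astar then 1 else 0 with hX
  have hXmeas : ∀ i, Measurable (X i) := fun i =>
    (measurable_of_countable (fun a => if a = astar then (1:ℝ) else 0)).comp (hmeas i)
  have hXindep : iIndepFun X Pr :=
    hindep.comp (fun _ a => if a = astar then (1:ℝ) else 0)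
      (fun _ => measurable_of_countable _)
  have hSetMeas : ∀ i, MeasurableSet {ω | act i ω = astar} := fun i =>
    (hmeas i) (measurableSet_singleton astar)
  -- pointwise form of exp (t * X i ω)
  have hkey : ∀ i, (fun ω => Real.exp (t * X i ω)) =
      fun ω => Set.indicator {ω | act i ω = astar} (fun _ => ρ - 1) ω + 1 := by
    intro i
    funext ω
    by_cases h : act i ω = astar
    · simp [hX, h, Set.indicator_of_mem, Set.mem_setOf_eq, hexpt]
    · simp [hX, h, Set.indicator_of_notMem, Set.mem_setOf_eq]
  have hXint : ∀ i, Integrable (fun ω => Real.exp (t * X i ω)) Pr := by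
    intro i
    rw [hkey i]
    exact ((integrable_const (ρ - 1)).indicator (hSetMeas i)).add (integrable_const 1)
  -- probability of arm astar
  have hμ1a : μ astar ≤ 1 := by
    have : μ astar + ∑ a ∈ univ.erase astar, μ a = 1 := by
      rw [← hμ1, add_comm, Finset.sum_erase_add _ _ (mem_univ astar)]
    have h2 : 0 ≤ ∑ a ∈ univ.erase astar, μ a :=
      Finset.sum_nonneg fun a _ => hμ0 a
    linarith
  have hPtoReal : ∀ i, (Pr {ω | act i ω = astar}).toReal = μ astar := by
    intro i
    rw [hdist i astar, ENNReal.toReal_ofReal (hμ0 astar)]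
  -- mgf of each X i
  have hmgf : ∀ i, mgf (X i) Pr t = (ρ - 1) * μ astar + 1 := by
    intro i
    unfold mgf
    rw [hkey i, integral_add ((integrable_const (ρ - 1)).indicator (hSetMeas i))
      (integrable_const 1), integral_indicator_const _ (hSetMeas i), integral_const]
    simp [Measure.real, hPtoReal i, mul_comm]
  have hmgf_le : ∀ i, mgf (X i) Pr t ≤ 2 * (1 - q) := by
    intro i
    rw [hmgf i]
    have hρ1' : ρ - 1 ≤ 0 := by linarith
    have : (ρ - 1) * μ astar ≤ (ρ - 1) * q :=
      mul_le_mul_of_nonpos_left hcov hρ1'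
    have hq' : (ρ - 1) * q = 1 - 2 * q := by
      rw [hρdef, sub_mul, div_mul_cancel₀ _ hq0.ne']
      ring
    linarith
  -- the sum
  set S : Ω → ℝ := ∑ i, X i with hS
  have hSapp : ∀ ω, S ω = ((cnt astar ω : ℕ) : ℝ) := by
    intro ω
    rw [hS, Finset.sum_apply, hcnt astar ω]
    simp [hX, Finset.sum_boole]
  have hSint : Integrable (fun ω => Real.exp (t * S ω)) Pr :=
    hXindep.integrable_exp_mul_sum hXmeas (fun i _ => hXint i)
  -- Chernoff bound
  have hchern := measure_le_le_exp_mul_mgf (X := S) (μ := Pr) ((N:ℝ)/2) ht0 hSint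
  have hmgfS : mgf S Pr t ≤ (2 * (1 - q)) ^ N := by
    rw [hS, hXindep.mgf_sum hXmeas]
    calc ∏ i : Fin N, mgf (X i) Pr t ≤ ∏ _i : Fin N, (2 * (1 - q)) :=
          Finset.prod_le_prod (fun i _ => mgf_nonneg) (fun i _ => hmgf_le i)
      _ = (2 * (1 - q)) ^ N := by simp
  -- the event inclusion
  have hsub : {ω | hatA ω ≠ astar} ⊆ {ω | S ω ≤ (N:ℝ)/2} := by
    intro ω hω
    simp only [Set.mem_setOf_eq] at hω ⊢
    rw [hSapp ω]
    have hdisj : Disjoint ((univ : Finset (Fin N)).filter (fun i => act i ω = astar))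
        ((univ : Finset (Fin N)).filter (fun i => act i ω = hatA ω)) := by
      rw [Finset.disjoint_left]
      intro i hi1 hi2
      rw [Finset.mem_filter] at hi1 hi2
      exact hω (hi1.2.symm.trans hi2.2).symm
    have hcard : cnt astar ω + cnt (hatA ω) ω ≤ N := by
      rw [hcnt, hcnt, ← Finset.card_union_of_disjoint hdisj]
      calc _ ≤ (univ : Finset (Fin N)).card := Finset.card_le_card (Finset.subset_univ _)
        _ = N := by simp
    have h2c : 2 * cnt astar ω ≤ N := by
      have := hmost ω astar
      omega
    have : ((2 * cnt astar ω : ℕ) : ℝ) ≤ (N : ℝ) := Nat.cast_le.mpr h2c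
    push_cast at this
    linarith
  -- assemble
  have hEmeas : MeasurableSet {ω | hatA ω ≠ astar} :=
    hatAmeas (measurableSet_singleton astar) |>.compl
  have step1 : ∫ ω, (r astar - r (hatA ω)) ∂Pr
      ≤ (Pr {ω | hatA ω ≠ astar}).toReal := by
    have hind : Integrable ({ω | hatA ω ≠ astar}.indicator (fun _ => (1:ℝ))) Pr :=
      (integrable_const 1).indicator hEmeas
    calc ∫ ω, (r astar - r (hatA ω)) ∂Pr
        ≤ ∫ ω, {ω | hatA ω ≠ astar}.indicator (fun _ => (1:ℝ)) ω ∂Pr := by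
          refine integral_mono hfint hind fun ω => ?_
          by_cases h : hatA ω = astar
          · simp [Set.indicator_apply, h]
          · simpa [Set.indicator_apply, h] using hfbound ω
      _ = (Pr {ω | hatA ω ≠ astar}).toReal := by
          rw [integral_indicator_const _ hEmeas]; simp [Measure.real]
  have step2 : (Pr {ω | hatA ω ≠ astar}).toReal ≤ (Pr {ω | S ω ≤ (N:ℝ)/2}).toReal :=
    ENNReal.toReal_mono (measure_ne_top _ _) (measure_mono hsub)
  have step3 : (Pr {ω | S ω ≤ (N:ℝ)/2}).toReal
      ≤ Real.exp (-t * ((N:ℝ)/2)) * (2 * (1 - q)) ^ N := by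
    refine hchern.trans ?_
    exact mul_le_mul_of_nonneg_left hmgfS (Real.exp_pos _).le
  -- final computation
  have hfinal : Real.exp (-t * ((N:ℝ)/2)) * (2 * (1 - q)) ^ N
      = Real.exp (-(N : ℝ) * klBern (1 / 2) q) := by
    have h2q : (0:ℝ) < 2 * (1 - q) := by linarith
    rw [← Real.exp_log (pow_pos h2q N), ← Real.exp_add]
    congr 1
    rw [Real.log_pow, htdef, hρdef, Real.log_div h1q.ne' hq0.ne',
      Real.log_mul (by norm_num) h1q.ne']
    unfold klBern
    rw [Real.log_div (by norm_num) hq0.ne', Real.log_div (by norm_num) h1q.ne']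
    have hhalf : Real.log (1/2) = -Real.log 2 := by
      rw [one_div, Real.log_inv]
    rw [show (1 : ℝ) - 1/2 = 1/2 by norm_num, hhalf]
    ring
  calc ∫ ω, (r astar - r (hatA ω)) ∂Pr ≤ (Pr {ω | S ω ≤ (N:ℝ)/2}).toReal :=
        step1.trans step2
    _ ≤ Real.exp (-t * ((N:ℝ)/2)) * (2 * (1 - q)) ^ N := step3
    _ = Real.exp (-(N : ℝ) * klBern (1 / 2) (1 / C)) := by rw [hfinal]
end

section
/- In a multi-armed bandit, if with probability at least 1−δ the event E = { |r̂(a) − r(a)| ≤ b(a) for all a ∈ A } holds and on E additionally N(a*) ≥ N·μ(a*)/2 > 0, then on E the LCB output â = argmax_a (r̂(a) − b(a)) with b(a) = √(log(2|A|/δ)/(2N(a))) satisfies r(a*) ≤ r(â) + 2√(log(2|A|/δ)/(N μ(a*))). -/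
/-- Deterministic step of the LCB analysis in multi-armed bandits: on the clean event
where the penalties give two-sided confidence bounds and the optimal arm's count
satisfies `N(a*) ≥ N μ(a*) / 2 > 0`, the LCB output `â` satisfies
`r(a*) ≤ r(â) + 2 √(log(2|A|/δ) / (N μ(a*)))`. -/
theorem lcb_mab_clean_event_bound
    {A : Type*} [Fintype A]
    (r rhat b : A → ℝ) (cnt : A → ℕ) (N : ℕ) (μstar δ : ℝ)
    (hδ : δ ∈ Set.Ioo (0 : ℝ) 1)
    (astar ahat : A)
    (hconf : ∀ a, |rhat a - r a| ≤ b a)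
    (hpos : 0 < (N : ℝ) * μstar)
    (hcnt : (N : ℝ) * μstar / 2 ≤ (cnt astar : ℝ))
    (hbstar : b astar =
      Real.sqrt (Real.log (2 * (Fintype.card A : ℝ) / δ) / (2 * (cnt astar : ℝ))))
    (hargmax : ∀ a, rhat a - b a ≤ rhat ahat - b ahat) :
    r astar ≤ r ahat +
      2 * Real.sqrt (Real.log (2 * (Fintype.card A : ℝ) / δ) / ((N : ℝ) * μstar)) := by
  have h1 := abs_le.1 (hconf astar)
  have h2 := abs_le.1 (hconf ahat)
  have key : r astar ≤ r ahat + 2 * b astar := by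
    have := hargmax astar
    linarith [h1.1, h1.2, h2.1, h2.2]
  have hcard : (1 : ℝ) ≤ (Fintype.card A : ℝ) := by
    have : 0 < Fintype.card A := Fintype.card_pos_iff.mpr ⟨astar⟩
    exact_mod_cast this
  have hlog : 0 ≤ Real.log (2 * (Fintype.card A : ℝ) / δ) := by
    apply Real.log_nonneg
    rw [le_div_iff₀ hδ.1]
    nlinarith [hδ.2]
  have hble : b astar ≤ Real.sqrt (Real.log (2 * (Fintype.card A : ℝ) / δ) / ((N : ℝ) * μstar)) := by
    rw [hbstar]
    apply Real.sqrt_le_sqrt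
    apply div_le_div_of_nonneg_left hlog hpos
    linarith
  linarith
end

section
/- In a contextual bandit with initial state distribution ρ and data distribution μ over state-action pairs satisfying ρ(s)/μ(s,π*(s)) ≤ C* for all s, the total mass of μ on suboptimal actions satisfies ∑_s ∑_{a ≠ π*(s)} μ(s,a) ≤ 1 − 1/C*; consequently ∑_{s : μ(s,π*(s)) < 10 μ̄(s)} ρ(s) ≤ min(1, 10(C*−1)), where μ̄(s) = ∑_{a ≠ π*(s)} μ(s,a). -/
open Finset

/-- In a contextual bandit with single-policy concentrability coefficient `C*`, the
total data mass on suboptimal actions is at most `1 - 1/C*`, and consequently the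
initial-state mass of states where `μ(s, π*(s)) < 10 μ̄(s)` is at most
`min(1, 10 (C* - 1))`. -/
theorem cb_suboptimal_mass
    {S A : Type*} [Fintype S] [Fintype A] [DecidableEq A]
    (ρ : S → ℝ) (μ : S → A → ℝ) (πstar : S → A) (C : ℝ)
    (hC : 1 ≤ C)
    (hρ0 : ∀ s, 0 ≤ ρ s) (hρ1 : ∑ s, ρ s = 1)
    (hμ0 : ∀ s a, 0 ≤ μ s a) (hμ1 : ∑ s, ∑ a, μ s a = 1)
    (hcov : ∀ s, ρ s ≤ C * μ s (πstar s)) :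
    (∑ s, ∑ a ∈ univ.erase (πstar s), μ s a) ≤ 1 - 1 / C ∧
    (∑ s ∈ univ.filter
        (fun s => μ s (πstar s) < 10 * ∑ a ∈ univ.erase (πstar s), μ s a), ρ s)
      ≤ min 1 (10 * (C - 1)) := by
  have hC0 : (0:ℝ) < C := lt_of_lt_of_le one_pos hC
  have hsum1 : ∀ s, ∑ a ∈ univ.erase (πstar s), μ s a = (∑ a, μ s a) - μ s (πstar s) := by
    intro s
    have := Finset.add_sum_erase univ (μ s) (Finset.mem_univ (πstar s))
    linarith
  have hπ : 1 / C ≤ ∑ s, μ s (πstar s) := by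
    have h1 : ∑ s, ρ s / C ≤ ∑ s, μ s (πstar s) :=
      Finset.sum_le_sum (fun s _ => by
        rw [div_le_iff₀ hC0]
        have := hcov s
        nlinarith [hμ0 s (πstar s)])
    calc 1/C = (∑ s, ρ s)/C := by rw [hρ1]
      _ = ∑ s, ρ s / C := by rw [Finset.sum_div]
      _ ≤ _ := h1
  have hA : (∑ s, ∑ a ∈ univ.erase (πstar s), μ s a) = 1 - ∑ s, μ s (πstar s) := by
    simp_rw [hsum1]
    rw [Finset.sum_sub_distrib, hμ1]
  have h1 : (∑ s, ∑ a ∈ univ.erase (πstar s), μ s a) ≤ 1 - 1 / C := by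
    rw [hA]; linarith
  refine ⟨h1, le_min ?_ ?_⟩
  · rw [← hρ1]
    exact Finset.sum_le_sum_of_subset_of_nonneg (Finset.subset_univ _) (fun s _ _ => hρ0 s)
  · have hμbar : ∀ s, 0 ≤ ∑ a ∈ univ.erase (πstar s), μ s a :=
      fun s => Finset.sum_nonneg (fun a _ => hμ0 s a)
    set T := univ.filter
      (fun s => μ s (πstar s) < 10 * ∑ a ∈ univ.erase (πstar s), μ s a) with hT
    have step1 : ∑ s ∈ T, ρ s ≤ ∑ s ∈ T, 10 * C * (∑ a ∈ univ.erase (πstar s), μ s a) := by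
      apply Finset.sum_le_sum
      intro s hs
      have hfil : μ s (πstar s) < 10 * ∑ a ∈ univ.erase (πstar s), μ s a :=
        (Finset.mem_filter.mp hs).2
      have := hcov s
      nlinarith [hC0]
    have step2 : ∑ s ∈ T, 10 * C * (∑ a ∈ univ.erase (πstar s), μ s a)
        ≤ 10 * C * ∑ s, (∑ a ∈ univ.erase (πstar s), μ s a) := by
      rw [← Finset.mul_sum]
      apply mul_le_mul_of_nonneg_left ?_ (by positivity)
      exact Finset.sum_le_sum_of_subset_of_nonneg (Finset.subset_univ T) (fun s _ _ => hμbar s)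
    have step3 : 10 * C * (∑ s, ∑ a ∈ univ.erase (πstar s), μ s a) ≤ 10 * C * (1 - 1/C) :=
      mul_le_mul_of_nonneg_left h1 (by positivity)
    have hcalc : 10 * C * (1 - 1/C) = 10 * (C - 1) := by
      field_simp
    linarith
end

section
/- In an offline contextual bandit with N i.i.d. samples, μ data distribution, and π a deterministic policy with max_s ρ(s)/μ(s,π(s)) ≤ C^π, the missing-mass sub-optimality term satisfies E_D[ ∑_s ρ(s)(r(s,π(s)) − r(s,π̂(s))) · 1{N(s,π(s)) = 0} ] ≤ ∑_s ρ(s)(1−μ(s,π(s)))^N ≤ 4 S C^π / (9N). -/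
open MeasureTheory ProbabilityTheory Finset

lemma te_neg_le (t : ℝ) (ht : 0 ≤ t) : t * Real.exp (-t) ≤ Real.exp (-1) := by
  have h := Real.add_one_le_exp (t - 1)
  have h2 : t ≤ Real.exp t * Real.exp (-1) := by
    rw [← Real.exp_add]
    convert h using 2 <;> ring
  calc t * Real.exp (-t) ≤ (Real.exp t * Real.exp (-1)) * Real.exp (-t) := by
        exact mul_le_mul_of_nonneg_right h2 (Real.exp_pos _).le
    _ = Real.exp (-1) := by rw [mul_right_comm, ← Real.exp_add]; simp

lemma x_one_sub_pow_le (N : ℕ) (hN : 0 < N) (x : ℝ) (hx0 : 0 ≤ x) (hx1 : x ≤ 1) :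
    x * (1 - x) ^ N ≤ 4 / (9 * N) := by
  have hNpos : (0:ℝ) < N := by exact_mod_cast hN
  have h1 : (1 - x) ^ N ≤ Real.exp (-(N * x)) := by
    have hb : 1 - x ≤ Real.exp (-x) := by
      have := Real.add_one_le_exp (-x); linarith
    calc (1 - x) ^ N ≤ (Real.exp (-x)) ^ N :=
          pow_le_pow_left₀ (by linarith) hb N
      _ = Real.exp (-(N * x)) := by rw [← Real.exp_nat_mul]; ring_nf
  have h2 : x * (1 - x) ^ N ≤ x * Real.exp (-(N * x)) :=
    mul_le_mul_of_nonneg_left h1 hx0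
  have h3 : x * Real.exp (-(N * x)) = (1 / N) * ((N * x) * Real.exp (-(N * x))) := by
    field_simp
  have h4 : (N * x) * Real.exp (-(N * x)) ≤ Real.exp (-1) :=
    te_neg_le _ (by positivity)
  have h5 : Real.exp (-1) ≤ 4 / 9 := by
    have hm : Real.exp (-1) * Real.exp 1 = 1 := by rw [← Real.exp_add]; simp
    nlinarith [Real.exp_one_gt_d9, Real.exp_pos (-1)]
  calc x * (1 - x) ^ N ≤ (1 / N) * ((N * x) * Real.exp (-(N * x))) := by rw [← h3]; exact h2
    _ ≤ (1 / N) * (4 / 9) := by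
        apply mul_le_mul_of_nonneg_left (le_trans h4 h5) (by positivity)
    _ = 4 / (9 * N) := by field_simp

/-- Missing-mass bound in offline contextual bandits: for any estimator `π̂` built on
`N` i.i.d. samples with state-action marginal `μ`, rewards in `[0,1]`, and
`ρ(s) ≤ C^π μ(s, π(s))` for all `s`,
`E_D[∑_s ρ(s)(r(s,π(s)) - r(s,π̂(s))) 1{N(s,π(s)) = 0}]
  ≤ ∑_s ρ(s)(1 - μ(s,π(s)))^N ≤ 4 S C^π / (9 N)`. -/
theorem cb_missing_mass
    {Ω : Type*} [MeasurableSpace Ω] (Pr : Measure Ω) [IsProbabilityMeasure Pr]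
    {S A : Type*} [Fintype S] [Fintype A] [DecidableEq S] [DecidableEq A]
    [MeasurableSpace (S × A)] [MeasurableSingletonClass (S × A)]
    (N : ℕ) (hN : 0 < N)
    (z : Fin N → Ω → S × A) (hmeas : ∀ i, Measurable (z i))
    (hindep : iIndepFun (m := fun _ : Fin N => inferInstance) z Pr)
    (μ : S → A → ℝ) (hμ0 : ∀ s a, 0 ≤ μ s a) (hμ1 : ∑ s, ∑ a, μ s a = 1)
    (hdist : ∀ i s a, Pr {ω | z i ω = (s, a)} = ENNReal.ofReal (μ s a))
    (ρ : S → ℝ) (hρ0 : ∀ s, 0 ≤ ρ s) (hρ1 : ∑ s, ρ s = 1)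
    (r : S → A → ℝ) (hr : ∀ s a, r s a ∈ Set.Icc (0 : ℝ) 1)
    (π : S → A) (C : ℝ) (hC : 1 ≤ C)
    (hcov : ∀ s, ρ s ≤ C * μ s (π s))
    (hatπ : Ω → S → A) :
    (∫ ω, ∑ s, ρ s * (r s (π s) - r s (hatπ ω s)) *
        (if ((univ : Finset (Fin N)).filter (fun i => z i ω = (s, π s))).card = 0
          then (1 : ℝ) else 0) ∂Pr)
      ≤ ∑ s, ρ s * (1 - μ s (π s)) ^ N ∧
    (∑ s, ρ s * (1 - μ s (π s)) ^ N)
      ≤ 4 * (Fintype.card S : ℝ) * C / (9 * N) := by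
  -- μ s (π s) ≤ 1
  have hμle1 : ∀ s, μ s (π s) ≤ 1 := by
    intro s
    rw [← hμ1]
    calc μ s (π s) ≤ ∑ a, μ s a :=
          Finset.single_le_sum (fun a _ => hμ0 s a) (mem_univ _)
      _ ≤ ∑ s', ∑ a, μ s' a :=
          Finset.single_le_sum (fun s' _ => Finset.sum_nonneg fun a _ => hμ0 s' a) (mem_univ _)
  have hRHS0 : 0 ≤ ∑ s, ρ s * (1 - μ s (π s)) ^ N := by
    apply Finset.sum_nonneg
    intro s _
    have : 0 ≤ 1 - μ s (π s) := by linarith [hμle1 s]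
    exact mul_nonneg (hρ0 s) (pow_nonneg this N)
  -- the event sets
  set E : S → Set Ω := fun s => {ω |
      ((univ : Finset (Fin N)).filter (fun i => z i ω = (s, π s))).card = 0} with hE
  have hEeq : ∀ s, E s = ⋂ i : Fin N, (z i) ⁻¹' ({(s, π s)}ᶜ) := by
    intro s
    ext ω
    simp [hE, Finset.card_eq_zero, Finset.filter_eq_empty_iff, Set.mem_iInter]
  have hEmeas : ∀ s, MeasurableSet (E s) := by
    intro s
    rw [hEeq s]
    exact MeasurableSet.iInter fun i =>
      (hmeas i) ((measurableSet_singleton _).compl)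
  -- probability of each event
  have hPrE : ∀ s, Pr (E s) = ENNReal.ofReal ((1 - μ s (π s)) ^ N) := by
    intro s
    rw [hEeq s]
    rw [hindep.meas_iInter (fun i => ⟨{(s, π s)}ᶜ, (measurableSet_singleton _).compl, rfl⟩)]
    have hPi : ∀ i : Fin N, Pr ((z i) ⁻¹' ({(s, π s)}ᶜ)) = ENNReal.ofReal (1 - μ s (π s)) := by
      intro i
      have hp : (z i) ⁻¹' ({(s, π s)}ᶜ) = ((z i) ⁻¹' {(s, π s)})ᶜ := by rfl
      rw [hp, prob_compl_eq_one_sub ((hmeas i) (measurableSet_singleton _))]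
      have : (z i) ⁻¹' {(s, π s)} = {ω | z i ω = (s, π s)} := by rfl
      rw [this, hdist i s (π s), ENNReal.ofReal_sub 1 (hμ0 s (π s)), ENNReal.ofReal_one]
    simp only [hPi]
    rw [Finset.prod_const, ENNReal.ofReal_pow (by linarith [hμle1 s])]
    simp
  -- the dominating function g
  set g : Ω → ℝ := fun ω => ∑ s, ρ s * Set.indicator (E s) (fun _ => (1:ℝ)) ω with hg
  have hg_int : Integrable g Pr := by
    apply integrable_finset_sum
    intro s _
    exact ((integrable_const (1:ℝ)).indicator (hEmeas s)).const_mul _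
  have hg_integral : ∫ ω, g ω ∂Pr = ∑ s, ρ s * (1 - μ s (π s)) ^ N := by
    rw [integral_finset_sum _ (fun s _ =>
      ((integrable_const (1:ℝ)).indicator (hEmeas s)).const_mul _)]
    apply Finset.sum_congr rfl
    intro s _
    rw [integral_const_mul]
    have : ∫ ω, Set.indicator (E s) (fun _ => (1:ℝ)) ω ∂Pr = (Pr (E s)).toReal := by
      rw [integral_indicator (hEmeas s)]
      simp [Measure.restrict_apply_univ, Measure.real]
    rw [this, hPrE s, ENNReal.toReal_ofReal]
    have h1 : 0 ≤ 1 - μ s (π s) := by linarith [hμle1 s]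
    positivity
  -- the integrand f
  set f : Ω → ℝ := fun ω => ∑ s, ρ s * (r s (π s) - r s (hatπ ω s)) *
        (if ((univ : Finset (Fin N)).filter (fun i => z i ω = (s, π s))).card = 0
          then (1 : ℝ) else 0) with hf
  have hfg : ∀ ω, f ω ≤ g ω := by
    intro ω
    apply Finset.sum_le_sum
    intro s _
    by_cases h : ((univ : Finset (Fin N)).filter (fun i => z i ω = (s, π s))).card = 0
    · have hEω : ω ∈ E s := h
      simp only [h, if_true, Set.indicator_of_mem hEω]
      have h1 := (hr s (π s)).2
      have h2 := (hr s (hatπ ω s)).1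
      have : r s (π s) - r s (hatπ ω s) ≤ 1 := by linarith
      nlinarith [hρ0 s]
    · have hEω : ω ∉ E s := h
      simp [h, Set.indicator_of_notMem hEω]
  constructor
  · by_cases hint : Integrable f Pr
    · calc ∫ ω, f ω ∂Pr ≤ ∫ ω, g ω ∂Pr := integral_mono hint hg_int hfg
        _ = _ := hg_integral
    · rw [show (∫ ω, ∑ s, ρ s * (r s (π s) - r s (hatπ ω s)) *
        (if ((univ : Finset (Fin N)).filter (fun i => z i ω = (s, π s))).card = 0
          then (1 : ℝ) else 0) ∂Pr) = ∫ ω, f ω ∂Pr from rfl,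
        integral_undef hint]
      exact hRHS0
  · have hNpos : (0:ℝ) < N := by exact_mod_cast hN
    calc ∑ s, ρ s * (1 - μ s (π s)) ^ N
        ≤ ∑ s, C * (μ s (π s) * (1 - μ s (π s)) ^ N) := by
          apply Finset.sum_le_sum
          intro s _
          have h1 : 0 ≤ 1 - μ s (π s) := by linarith [hμle1 s]
          have h2 : (0:ℝ) ≤ (1 - μ s (π s)) ^ N := by positivity
          calc ρ s * (1 - μ s (π s)) ^ N ≤ (C * μ s (π s)) * (1 - μ s (π s)) ^ N :=
                mul_le_mul_of_nonneg_right (hcov s) h2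
            _ = C * (μ s (π s) * (1 - μ s (π s)) ^ N) := by ring
      _ ≤ ∑ _s : S, C * (4 / (9 * N)) := by
          apply Finset.sum_le_sum
          intro s _
          exact mul_le_mul_of_nonneg_left
            (x_one_sub_pow_le N hN _ (hμ0 s (π s)) (hμle1 s)) (by linarith)
      _ = 4 * (Fintype.card S : ℝ) * C / (9 * N) := by
          rw [Finset.sum_const, Finset.card_univ, nsmul_eq_mul]
          field_simp
end

section
/- In a discounted MDP, let V_{t-1} ≤ V_t ≤ V^{π_t} hold and suppose the Bellman-type concentration event holds, i.e., |r(s,a) − r_t(s,a) + γ(P_{s,a} − P^t_{s,a})·V_{t-1}| ≤ b_t(s,a) for all s,a,t, where Q_t(s,a) = r_t(s,a) − b_t(s,a) + γ P^t_{s,a}·V_{t-1}. Then for any policy π, Q^π − Q_t ≤ γ P^π (Q^π − Q_{t-1}) + 2 b_t (entrywise), provided V_{t-1}(s) ≥ max_a Q_{t-1}(s,a) for all s. -/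
/-- Contraction property of value iteration with LCB in discounted MDPs: assuming
`V_{t-1} ≤ V_t ≤ V^{π_t}`, the Bellman-type concentration event
`|r(s,a) - r_t(s,a) + γ (P_{s,a} - P^t_{s,a}) · V_{t-1}| ≤ b_t(s,a)`, the LCB update
`Q_t(s,a) = r_t(s,a) - b_t(s,a) + γ P^t_{s,a} · V_{t-1}`, and
`V_{t-1}(s) ≥ max_a Q_{t-1}(s,a)`, one has, for any policy `π`,
`Q^π - Q_t ≤ γ P^π (Q^π - Q_{t-1}) + 2 b_t` entrywise. -/
theorem vi_lcb_contraction
    {S A : Type*} [Fintype S] [Fintype A]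
    (γ : ℝ) (hγ0 : 0 ≤ γ) (hγ1 : γ < 1)
    (P Pt : S → A → S → ℝ)
    (hP0 : ∀ s a s', 0 ≤ P s a s') (hP1 : ∀ s a, ∑ s', P s a s' = 1)
    (r rt bt : S → A → ℝ)
    (Vt1 Vt Vπt : S → ℝ) (Qt1 Qt Qπ : S → A → ℝ)
    (π πt : S → A)
    -- V_{t-1} ≤ V_t ≤ V^{π_t}
    (hmono1 : ∀ s, Vt1 s ≤ Vt s)
    (hVπt : ∀ s, Vπt s = r s (πt s) + γ * ∑ s', P s (πt s) s' * Vπt s')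
    (hmono2 : ∀ s, Vt s ≤ Vπt s)
    -- concentration event
    (hconc : ∀ s a,
      |r s a - rt s a + γ * ∑ s', (P s a s' - Pt s a s') * Vt1 s'| ≤ bt s a)
    -- LCB update for Q_t
    (hQt : ∀ s a, Qt s a = rt s a - bt s a + γ * ∑ s', Pt s a s' * Vt1 s')
    -- Bellman equation for Q^π
    (hQπ : ∀ s a, Qπ s a = r s a + γ * ∑ s', P s a s' * Qπ s' (π s'))
    -- V_{t-1}(s) ≥ max_a Q_{t-1}(s,a)
    (hVQ : ∀ s a, Qt1 s a ≤ Vt1 s) :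
    ∀ s a, Qπ s a - Qt s a ≤
      γ * (∑ s', P s a s' * (Qπ s' (π s') - Qt1 s' (π s'))) + 2 * bt s a := by
  intro s a
  have hc := (abs_le.mp (hconc s a)).2
  have hsum : ∑ s', P s a s' * (Qπ s' (π s') - Vt1 s') ≤
      ∑ s', P s a s' * (Qπ s' (π s') - Qt1 s' (π s')) := by
    apply Finset.sum_le_sum
    intro i _
    exact mul_le_mul_of_nonneg_left (by linarith [hVQ i (π i)]) (hP0 s a i)
  have key : Qπ s a - Qt s a =
      (r s a - rt s a + γ * ∑ s', (P s a s' - Pt s a s') * Vt1 s')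
      + bt s a + γ * ∑ s', P s a s' * (Qπ s' (π s') - Vt1 s') := by
    rw [hQπ s a, hQt s a]
    simp only [sub_mul, mul_sub, Finset.sum_sub_distrib]
    ring
  rw [key]
  have := mul_le_mul_of_nonneg_left hsum hγ0
  linarith
end

section
/- In a discounted MDP with rewards in [0,1], suppose on an event E that Q_0 = 0 and for all t ≥ 1 and all policies π, Q^π − Q_t ≤ γ P^π (Q^π − Q_{t-1}) + 2 b_t entrywise, and moreover E_ρ[V^π − V^{π_t}] ≤ ρ^π (Q^π − Q_t). Then for all t, J(π) − J(π_t) ≤ γ^t/(1−γ) + 2 ∑_{i=1}^{t} E_{ν^π_{t−i}}[ b_i(s,a) ], where ν^π_k = ρ^π (γ P^π)^k. -/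
open Finset

/-- Value difference lemma for VI-LCB in discounted MDPs: if `Q_0 = 0`, rewards lie in
`[0,1]` (so `Q^π ≤ (1-γ)⁻¹` entrywise), the recursion
`Q^π - Q_t ≤ γ P^π (Q^π - Q_{t-1}) + 2 b_t` holds entrywise, and
`J(π) - J(π_t) ≤ ρ^π (Q^π - Q_t)`, then
`J(π) - J(π_t) ≤ γ^t/(1-γ) + 2 ∑_{i=1}^t E_{ν^π_{t-i}}[b_i]`,
where `ν^π_k = ρ^π (γ P^π)^k`. -/
theorem vi_lcb_value_difference
    {ι : Type*} [Fintype ι] [DecidableEq ι]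
    (γ : ℝ) (hγ0 : 0 ≤ γ) (hγ1 : γ < 1)
    (ρπ : ι → ℝ) (hρ0 : ∀ x, 0 ≤ ρπ x) (hρ1 : ∑ x, ρπ x = 1)
    (Pπ : Matrix ι ι ℝ) (hP0 : ∀ x y, 0 ≤ Pπ x y) (hP1 : ∀ x, ∑ y, Pπ x y = 1)
    (Qπ : ι → ℝ) (hQπ0 : ∀ x, 0 ≤ Qπ x) (hQπ1 : ∀ x, Qπ x ≤ 1 / (1 - γ))
    (Q : ℕ → ι → ℝ) (hQ0 : ∀ x, Q 0 x = 0)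
    (b : ℕ → ι → ℝ) (hb : ∀ t x, 0 ≤ b t x)
    (hrec : ∀ t : ℕ, 1 ≤ t → ∀ x,
      Qπ x - Q t x ≤ γ * ∑ y, Pπ x y * (Qπ y - Q (t - 1) y) + 2 * b t x)
    (Jdiff : ℕ → ℝ)
    (hJ : ∀ t, Jdiff t ≤ ∑ x, ρπ x * (Qπ x - Q t x)) :
    ∀ t, Jdiff t ≤ γ ^ t / (1 - γ) +
      2 * ∑ i ∈ Icc 1 t, ∑ x,
        (γ ^ (t - i) * ∑ y, ρπ y * (Pπ ^ (t - i)) y x) * b i x := by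
  have hγ' : (0:ℝ) < 1 - γ := by linarith
  -- nonnegativity of powers
  have hPpow0 : ∀ t (x y : ι), 0 ≤ (Pπ ^ t) x y := by
    intro t
    induction t with
    | zero =>
      intro x y
      by_cases h : x = y <;> simp [Matrix.one_apply, h]
    | succ t ih =>
      intro x y
      rw [pow_succ', Matrix.mul_apply]
      exact Finset.sum_nonneg fun j _ => mul_nonneg (hP0 x j) (ih j y)
  -- row sums of powers
  have hPpow1 : ∀ t (x : ι), ∑ y, (Pπ ^ t) x y = 1 := by
    intro t
    induction t with
    | zero => intro x; simp [Matrix.one_apply]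
    | succ t ih =>
      intro x
      simp only [pow_succ', Matrix.mul_apply]
      rw [Finset.sum_comm]
      simp [← Finset.mul_sum, ih, hP1]
  -- key "step" identity
  have step : ∀ (k : ℕ) (g : ι → ℝ) (x : ι),
      ∑ z, (Pπ ^ (k+1)) x z * g z = ∑ y, Pπ x y * ∑ z, (Pπ ^ k) y z * g z := by
    intro k g x
    simp only [pow_succ', Matrix.mul_apply, Finset.sum_mul, Finset.mul_sum]
    rw [Finset.sum_comm]
    exact Finset.sum_congr rfl fun y _ => Finset.sum_congr rfl fun z _ => by ring
  -- main pointwise bound, by induction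
  have key : ∀ t (x : ι), Qπ x - Q t x ≤ γ ^ t * ∑ y, (Pπ ^ t) x y * Qπ y
      + 2 * ∑ i ∈ Icc 1 t, γ ^ (t - i) * ∑ y, (Pπ ^ (t - i)) x y * b i y := by
    intro t
    induction t with
    | zero =>
      intro x
      simp [hQ0, Matrix.one_apply, ite_mul, Finset.sum_ite_eq]
    | succ t ih =>
      intro x
      have h1 := hrec (t+1) (Nat.succ_le_succ (Nat.zero_le t)) x
      simp only [Nat.add_sub_cancel] at h1
      have h2 : ∑ y, Pπ x y * (Qπ y - Q t y)
          ≤ ∑ y, Pπ x y * (γ ^ t * ∑ z, (Pπ ^ t) y z * Qπ z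
            + 2 * ∑ i ∈ Icc 1 t, γ ^ (t - i) * ∑ z, (Pπ ^ (t - i)) y z * b i z) :=
        Finset.sum_le_sum fun y _ => mul_le_mul_of_nonneg_left (ih y) (hP0 x y)
      have h3 : Qπ x - Q (t+1) x
          ≤ γ * (∑ y, Pπ x y * (γ ^ t * ∑ z, (Pπ ^ t) y z * Qπ z
            + 2 * ∑ i ∈ Icc 1 t, γ ^ (t - i) * ∑ z, (Pπ ^ (t - i)) y z * b i z))
            + 2 * b (t+1) x := by
        have := mul_le_mul_of_nonneg_left h2 hγ0
        linarith
      refine h3.trans (le_of_eq ?_)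
      have hIcc : Icc 1 (t+1) = insert (t+1) (Icc 1 t) := by
        ext n; simp only [Finset.mem_Icc, Finset.mem_insert]; omega
      rw [hIcc, Finset.sum_insert (by simp)]
      have e0 : γ ^ (t + 1 - (t+1)) * ∑ z, (Pπ ^ (t + 1 - (t+1))) x z * b (t+1) z
          = b (t+1) x := by
        simp [Matrix.one_apply, ite_mul, Finset.sum_ite_eq]
      rw [e0]
      have e1 : ∑ z, (Pπ ^ (t+1)) x z * Qπ z
          = ∑ y, Pπ x y * ∑ z, (Pπ ^ t) y z * Qπ z := step t Qπ x
      have e2 : ∀ i ∈ Icc 1 t, γ ^ (t+1-i) * ∑ z, (Pπ ^ (t+1-i)) x z * b i z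
          = γ * (γ ^ (t-i) * ∑ y, Pπ x y * ∑ z, (Pπ ^ (t-i)) y z * b i z) := by
        intro i hi
        have h : t + 1 - i = (t - i) + 1 := by
          have := (Finset.mem_Icc.mp hi).2; omega
        rw [h, step (t-i) (b i) x, pow_succ]
        ring
      rw [Finset.sum_congr rfl e2, e1]
      -- now pure finite-sum algebra
      have e3 : ∑ y, Pπ x y * (γ ^ t * ∑ z, (Pπ ^ t) y z * Qπ z
            + 2 * ∑ i ∈ Icc 1 t, γ ^ (t - i) * ∑ z, (Pπ ^ (t - i)) y z * b i z)
          = γ ^ t * ∑ y, Pπ x y * ∑ z, (Pπ ^ t) y z * Qπ z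
            + 2 * ∑ y, Pπ x y * ∑ i ∈ Icc 1 t,
                γ ^ (t - i) * ∑ z, (Pπ ^ (t - i)) y z * b i z := by
        rw [Finset.mul_sum, Finset.mul_sum, ← Finset.sum_add_distrib]
        exact Finset.sum_congr rfl fun y _ => by ring
      rw [e3]
      have e4 : ∑ y, Pπ x y * ∑ i ∈ Icc 1 t,
            γ ^ (t - i) * ∑ z, (Pπ ^ (t - i)) y z * b i z
          = ∑ i ∈ Icc 1 t,
            γ ^ (t - i) * ∑ y, Pπ x y * ∑ z, (Pπ ^ (t - i)) y z * b i z := by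
        simp only [Finset.mul_sum]
        rw [Finset.sum_comm]
        exact Finset.sum_congr rfl fun i _ => Finset.sum_congr rfl fun y _ =>
          Finset.sum_congr rfl fun z _ => by ring
      rw [e4]
      have e5 : ∑ i ∈ Icc 1 t,
            γ * (γ ^ (t - i) * ∑ y, Pπ x y * ∑ z, (Pπ ^ (t - i)) y z * b i z)
          = γ * ∑ i ∈ Icc 1 t,
            γ ^ (t - i) * ∑ y, Pπ x y * ∑ z, (Pπ ^ (t - i)) y z * b i z :=
        (Finset.mul_sum _ _ _).symm
      rw [e5, pow_succ]
      ring
  -- conclude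
  intro t
  refine (hJ t).trans ?_
  have h4 : ∑ x, ρπ x * (Qπ x - Q t x)
      ≤ ∑ x, ρπ x * (γ ^ t * ∑ y, (Pπ ^ t) x y * Qπ y
        + 2 * ∑ i ∈ Icc 1 t, γ ^ (t - i) * ∑ y, (Pπ ^ (t - i)) x y * b i y) :=
    Finset.sum_le_sum fun x _ => mul_le_mul_of_nonneg_left (key t x) (hρ0 x)
  refine h4.trans ?_
  have hsplit : ∑ x, ρπ x * (γ ^ t * ∑ y, (Pπ ^ t) x y * Qπ y
        + 2 * ∑ i ∈ Icc 1 t, γ ^ (t - i) * ∑ y, (Pπ ^ (t - i)) x y * b i y)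
      = ∑ x, ρπ x * (γ ^ t * ∑ y, (Pπ ^ t) x y * Qπ y)
        + 2 * ∑ x, ρπ x * ∑ i ∈ Icc 1 t,
            γ ^ (t - i) * ∑ y, (Pπ ^ (t - i)) x y * b i y := by
    rw [Finset.mul_sum, ← Finset.sum_add_distrib]
    exact Finset.sum_congr rfl fun x _ => by ring
  rw [hsplit]
  have hbound : ∑ x, ρπ x * (γ ^ t * ∑ y, (Pπ ^ t) x y * Qπ y) ≤ γ ^ t / (1 - γ) := by
    have hinner : ∀ x : ι, ∑ y, (Pπ ^ t) x y * Qπ y ≤ 1 / (1 - γ) := by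
      intro x
      calc ∑ y, (Pπ ^ t) x y * Qπ y
          ≤ ∑ y, (Pπ ^ t) x y * (1 / (1 - γ)) :=
            Finset.sum_le_sum fun y _ =>
              mul_le_mul_of_nonneg_left (hQπ1 y) (hPpow0 t x y)
        _ = 1 / (1 - γ) := by rw [← Finset.sum_mul, hPpow1, one_mul]
    calc ∑ x, ρπ x * (γ ^ t * ∑ y, (Pπ ^ t) x y * Qπ y)
        ≤ ∑ x, ρπ x * (γ ^ t * (1 / (1 - γ))) := by
          refine Finset.sum_le_sum fun x _ => mul_le_mul_of_nonneg_left ?_ (hρ0 x)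
          exact mul_le_mul_of_nonneg_left (hinner x) (pow_nonneg hγ0 t)
      _ = γ ^ t / (1 - γ) := by rw [← Finset.sum_mul, hρ1, one_mul]; ring
  have heq : ∑ x, ρπ x * ∑ i ∈ Icc 1 t,
        γ ^ (t - i) * ∑ y, (Pπ ^ (t - i)) x y * b i y
      = ∑ i ∈ Icc 1 t, ∑ x,
        (γ ^ (t - i) * ∑ y, ρπ y * (Pπ ^ (t - i)) y x) * b i x := by
    have expand : ∀ x : ι, ρπ x * ∑ i ∈ Icc 1 t,
          γ ^ (t - i) * ∑ y, (Pπ ^ (t - i)) x y * b i y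
        = ∑ i ∈ Icc 1 t, ∑ y, γ ^ (t - i) * (ρπ x * ((Pπ ^ (t - i)) x y * b i y)) := by
      intro x
      rw [Finset.mul_sum]
      refine Finset.sum_congr rfl fun i _ => ?_
      rw [Finset.mul_sum, Finset.mul_sum]
      exact Finset.sum_congr rfl fun y _ => by ring
    rw [Finset.sum_congr rfl fun x _ => expand x, Finset.sum_comm]
    refine Finset.sum_congr rfl fun i _ => ?_
    rw [Finset.sum_comm]
    refine Finset.sum_congr rfl fun z _ => ?_
    rw [Finset.mul_sum, Finset.sum_mul]
    exact Finset.sum_congr rfl fun y _ => by ring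
  rw [heq] at *
  have h2nn : (0:ℝ) ≤ 2 := by norm_num
  linarith [hbound]
end

section
/- In an infinite-horizon discounted MDP with rewards in [0,1] and discount γ, for any two deterministic policies π and π̂, J(π) − J(π̂) ≤ (1−γ)^{-2} · E_{s ∼ d_π}[ 1{ π̂(s) ≠ π(s) } ], where d_π is the normalized discounted state occupancy measure of π. -/
/-- Performance difference bound in discounted MDPs: for any two deterministic
policies `π`, `π̂`, with rewards in `[0,1]`,
`J(π) - J(π̂) ≤ (1-γ)⁻² E_{s ∼ d_π}[1{π̂(s) ≠ π(s)}]`, where `d_π` is the normalized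
discounted state occupancy measure of `π`. -/
theorem perf_diff_discounted
    {S A : Type*} [Fintype S] [DecidableEq A]
    (γ : ℝ) (hγ0 : 0 ≤ γ) (hγ1 : γ < 1)
    (P : S → A → S → ℝ)
    (hP0 : ∀ s a s', 0 ≤ P s a s') (hP1 : ∀ s a, ∑ s', P s a s' = 1)
    (r : S → A → ℝ) (hr : ∀ s a, r s a ∈ Set.Icc (0 : ℝ) 1)
    (ρ : S → ℝ) (hρ0 : ∀ s, 0 ≤ ρ s) (hρ1 : ∑ s, ρ s = 1)
    (π πhat : S → A) (Vπ Vπhat : S → ℝ)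
    (hVπ : ∀ s, Vπ s = r s (π s) + γ * ∑ s', P s (π s) s' * Vπ s')
    (hVπhat : ∀ s, Vπhat s = r s (πhat s) + γ * ∑ s', P s (πhat s) s' * Vπhat s')
    (d : S → ℝ)
    (hd : ∀ s, d s = (1 - γ) * ρ s + γ * ∑ s', d s' * P s' (π s') s) :
    ∑ s, ρ s * (Vπ s - Vπhat s) ≤
      (1 / (1 - γ)) ^ 2 * ∑ s, d s * (if πhat s = π s then 0 else 1) := by
  have hγ : (0:ℝ) < 1 - γ := by linarith
  rcases isEmpty_or_nonempty S with hS | hS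
  · simp
  -- upper bound on Vπhat
  have hVub : ∀ s, Vπhat s ≤ 1 / (1 - γ) := by
    obtain ⟨s0, -, hs0⟩ := Finset.exists_max_image Finset.univ Vπhat
      ⟨Classical.arbitrary S, Finset.mem_univ _⟩
    have hb : ∑ s', P s0 (πhat s0) s' * Vπhat s' ≤ Vπhat s0 := by
      calc ∑ s', P s0 (πhat s0) s' * Vπhat s'
          ≤ ∑ s', P s0 (πhat s0) s' * Vπhat s0 :=
            Finset.sum_le_sum fun i _ =>
              mul_le_mul_of_nonneg_left (hs0 i (Finset.mem_univ i)) (hP0 _ _ _)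
        _ = Vπhat s0 := by rw [← Finset.sum_mul, hP1, one_mul]
    have hrt := (hr s0 (πhat s0)).2
    have h1 : Vπhat s0 ≤ 1 + γ * Vπhat s0 := by
      have := hVπhat s0
      nlinarith
    have hs0' : Vπhat s0 ≤ 1 / (1 - γ) := by
      rw [le_div_iff₀ hγ]; nlinarith
    exact fun s => le_trans (hs0 s (Finset.mem_univ s)) hs0'
  -- lower bound on Vπhat
  have hVlb : ∀ s, 0 ≤ Vπhat s := by
    obtain ⟨s1, -, hs1⟩ := Finset.exists_min_image Finset.univ Vπhat
      ⟨Classical.arbitrary S, Finset.mem_univ _⟩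
    have hb : Vπhat s1 ≤ ∑ s', P s1 (πhat s1) s' * Vπhat s' := by
      calc Vπhat s1 = ∑ s', P s1 (πhat s1) s' * Vπhat s1 := by
            rw [← Finset.sum_mul, hP1, one_mul]
        _ ≤ ∑ s', P s1 (πhat s1) s' * Vπhat s' :=
            Finset.sum_le_sum fun i _ =>
              mul_le_mul_of_nonneg_left (hs1 i (Finset.mem_univ i)) (hP0 _ _ _)
    have hrt := (hr s1 (πhat s1)).1
    have h1 : γ * Vπhat s1 ≤ Vπhat s1 := by
      have := hVπhat s1
      nlinarith
    have hs1' : 0 ≤ Vπhat s1 := by nlinarith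
    exact fun s => le_trans hs1' (hs1 s (Finset.mem_univ s))
  -- nonnegativity of d
  have hd0 : ∀ s, 0 ≤ d s := by
    set n : S → ℝ := fun s => max (-d s) 0 with hn
    have hn0 : ∀ s, 0 ≤ n s := fun s => le_max_right _ _
    have hnd : ∀ s, -d s ≤ n s := fun s => le_max_left _ _
    have hnle : ∀ s, n s ≤ γ * ∑ s', n s' * P s' (π s') s := by
      intro s
      apply max_le
      · have h1 : γ * ∑ s', (-(n s')) * P s' (π s') s ≤ γ * ∑ s', d s' * P s' (π s') s := by
          apply mul_le_mul_of_nonneg_left _ hγ0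
          apply Finset.sum_le_sum; intro i _
          apply mul_le_mul_of_nonneg_right _ (hP0 _ _ _)
          linarith [hnd i]
        have heq : ∑ s', (-(n s')) * P s' (π s') s = -∑ s', n s' * P s' (π s') s := by
          simp [neg_mul]
        rw [heq] at h1
        have := hd s
        have hρs := hρ0 s
        nlinarith
      · exact mul_nonneg hγ0 (Finset.sum_nonneg fun i _ => mul_nonneg (hn0 i) (hP0 _ _ _))
    have hsum : ∑ s, n s ≤ γ * ∑ s, n s := by
      calc ∑ s, n s ≤ ∑ s, γ * ∑ s', n s' * P s' (π s') s :=
            Finset.sum_le_sum fun s _ => hnle s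
        _ = γ * ∑ s, ∑ s', n s' * P s' (π s') s := by rw [← Finset.mul_sum]
        _ = γ * ∑ s', ∑ s, n s' * P s' (π s') s := by rw [Finset.sum_comm]
        _ = γ * ∑ s', n s' * ∑ s, P s' (π s') s := by
            congr 1; exact Finset.sum_congr rfl fun s' _ => (Finset.mul_sum _ _ _).symm
        _ = γ * ∑ s, n s := by simp [hP1]
    have hsn : (0:ℝ) ≤ ∑ s, n s := Finset.sum_nonneg fun s _ => hn0 s
    have hzero : ∑ s, n s = 0 := by nlinarith
    have := (Finset.sum_eq_zero_iff_of_nonneg (fun s _ => hn0 s)).mp hzero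
    intro s
    have hns : n s = 0 := this s (Finset.mem_univ s)
    have := hnd s
    linarith
  -- performance difference lemma
  set A' : S → ℝ := fun s =>
    r s (π s) + γ * ∑ s', P s (π s) s' * Vπhat s' - Vπhat s with hA
  have hg : ∀ s, A' s = (Vπ s - Vπhat s) - γ * ∑ s', P s (π s) s' * (Vπ s' - Vπhat s') := by
    intro s
    have heq : ∑ s', P s (π s) s' * (Vπ s' - Vπhat s')
        = ∑ s', P s (π s) s' * Vπ s' - ∑ s', P s (π s) s' * Vπhat s' := by
      rw [← Finset.sum_sub_distrib]
      exact Finset.sum_congr rfl fun i _ => by ring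
    simp only [hA]
    rw [heq, hVπ s]; ring
  have hpdl : ∑ s, d s * A' s = (1 - γ) * ∑ s, ρ s * (Vπ s - Vπhat s) := by
    have step1 : ∑ s, d s * A' s
        = ∑ s, d s * (Vπ s - Vπhat s)
          - ∑ s, ∑ s', γ * (d s * (P s (π s) s' * (Vπ s' - Vπhat s'))) := by
      rw [← Finset.sum_sub_distrib]
      apply Finset.sum_congr rfl
      intro s _
      have h3 : ∑ s', γ * (d s * (P s (π s) s' * (Vπ s' - Vπhat s')))
          = γ * (d s * ∑ s', P s (π s) s' * (Vπ s' - Vπhat s')) := by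
        rw [Finset.mul_sum, Finset.mul_sum]
      rw [hg s, h3]; ring
    rw [step1, Finset.sum_comm]
    have step2 : ∀ s', ∑ s, γ * (d s * (P s (π s) s' * (Vπ s' - Vπhat s')))
        = (d s' - (1 - γ) * ρ s') * (Vπ s' - Vπhat s') := by
      intro s'
      have h2 : γ * ∑ s, d s * P s (π s) s' = d s' - (1 - γ) * ρ s' := by
        have := hd s'
        linarith
      calc ∑ s, γ * (d s * (P s (π s) s' * (Vπ s' - Vπhat s')))
          = (γ * ∑ s, d s * P s (π s) s') * (Vπ s' - Vπhat s') := by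
            rw [Finset.mul_sum, Finset.sum_mul]
            exact Finset.sum_congr rfl fun i _ => by ring
        _ = (d s' - (1 - γ) * ρ s') * (Vπ s' - Vπhat s') := by rw [h2]
    calc ∑ s, d s * (Vπ s - Vπhat s)
          - ∑ s', ∑ s, γ * (d s * (P s (π s) s' * (Vπ s' - Vπhat s')))
        = ∑ s, d s * (Vπ s - Vπhat s)
          - ∑ s', (d s' - (1 - γ) * ρ s') * (Vπ s' - Vπhat s') := by
          rw [Finset.sum_congr rfl fun s' _ => step2 s']
      _ = ∑ s, (1 - γ) * (ρ s * (Vπ s - Vπhat s)) := by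
          rw [← Finset.sum_sub_distrib]
          exact Finset.sum_congr rfl fun s _ => by ring
      _ = (1 - γ) * ∑ s, ρ s * (Vπ s - Vπhat s) := by rw [← Finset.mul_sum]
  -- pointwise advantage bound
  have hAle : ∀ s, d s * A' s ≤
      (1 / (1 - γ)) * (d s * (if πhat s = π s then 0 else 1)) := by
    intro s
    by_cases h : πhat s = π s
    · have hA0 : A' s = 0 := by
        have hh := hVπhat s
        rw [h] at hh
        simp only [hA]
        linarith
      simp [hA0, if_pos h]
    · rw [if_neg h]
      have hPV : ∑ s', P s (π s) s' * Vπhat s' ≤ 1 / (1 - γ) := by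
        calc ∑ s', P s (π s) s' * Vπhat s'
            ≤ ∑ s', P s (π s) s' * (1 / (1 - γ)) :=
              Finset.sum_le_sum fun i _ =>
                mul_le_mul_of_nonneg_left (hVub i) (hP0 _ _ _)
          _ = 1 / (1 - γ) := by rw [← Finset.sum_mul, hP1, one_mul]
      have hAub : A' s ≤ 1 / (1 - γ) := by
        have hrt := (hr s (π s)).2
        have hvl := hVlb s
        have key : γ * ∑ s', P s (π s) s' * Vπhat s' ≤ γ / (1 - γ) := by
          calc γ * ∑ s', P s (π s) s' * Vπhat s' ≤ γ * (1 / (1 - γ)) :=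
                mul_le_mul_of_nonneg_left hPV hγ0
            _ = γ / (1 - γ) := by ring
        simp only [hA]
        have : (1:ℝ) + γ / (1 - γ) = 1 / (1 - γ) := by field_simp; ring
        linarith
      calc d s * A' s ≤ d s * (1 / (1 - γ)) :=
            mul_le_mul_of_nonneg_left hAub (hd0 s)
        _ = (1 / (1 - γ)) * (d s * 1) := by ring
  have hsum : ∑ s, d s * A' s
      ≤ (1 / (1 - γ)) * ∑ s, d s * (if πhat s = π s then 0 else 1) := by
    rw [Finset.mul_sum]
    exact Finset.sum_le_sum fun s _ => hAle s
  rw [← mul_le_mul_iff_right₀ hγ]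
  calc (1 - γ) * ∑ s, ρ s * (Vπ s - Vπhat s) = ∑ s, d s * A' s := hpdl.symm
    _ ≤ (1 / (1 - γ)) * ∑ s, d s * (if πhat s = π s then 0 else 1) := hsum
    _ = (1 - γ) * ((1 / (1 - γ)) ^ 2 * ∑ s, d s * (if πhat s = π s then 0 else 1)) := by
        field_simp
end

section
/- In an episodic MDP with horizon H and rewards in [0,1], for any two deterministic policies π and π̂, J(π) − J(π̂) ≤ H² · E_{s ∼ d_π}[ 1{ π(s) ≠ π̂(s) } ], where d_π(s) = (1/H)∑_{h=1}^H P_h(s_h = s; π). -/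
open Finset

/-- `epiVal P r π k h s` is the value of policy `π` starting from state `s` at level `h`
with `k` steps remaining (so `epiVal P r π H 0` is the `H`-step value function `V^π_1`). -/
noncomputable def epiVal {S A : Type*} [Fintype S]
    (P : ℕ → S → A → S → ℝ) (r : ℕ → S → A → ℝ) (π : ℕ → S → A) :
    ℕ → ℕ → S → ℝ
  | 0, _, _ => 0
  | k + 1, h, s =>
      r h s (π h s) + ∑ s', P h s (π h s) s' * epiVal P r π k (h + 1) s'

/-- `epiOcc P π ρ h s` is the probability that the trajectory of `π` started from `ρ`
visits state `s` at level `h`. -/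
noncomputable def epiOcc {S A : Type*} [Fintype S]
    (P : ℕ → S → A → S → ℝ) (π : ℕ → S → A) (ρ : S → ℝ) : ℕ → S → ℝ
  | 0 => ρ
  | h + 1 => fun s' => ∑ s, epiOcc P π ρ h s * P h s (π h s) s'

lemma epiVal_mem {S A : Type*} [Fintype S]
    (P : ℕ → S → A → S → ℝ)
    (hP0 : ∀ h s a s', 0 ≤ P h s a s') (hP1 : ∀ h s a, ∑ s', P h s a s' = 1)
    (r : ℕ → S → A → ℝ) (hr : ∀ h s a, r h s a ∈ Set.Icc (0 : ℝ) 1)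
    (π : ℕ → S → A) :
    ∀ (k h : ℕ) (s : S), epiVal P r π k h s ∈ Set.Icc (0 : ℝ) (k : ℝ) := by
  intro k
  induction k with
  | zero => intro h s; simp [epiVal]
  | succ k ih =>
      intro h s
      obtain ⟨hr0, hr1⟩ := hr h s (π h s)
      constructor
      · have : 0 ≤ ∑ s', P h s (π h s) s' * epiVal P r π k (h + 1) s' :=
          Finset.sum_nonneg fun s' _ =>
            mul_nonneg (hP0 _ _ _ _) (ih (h + 1) s').1
        simpa [epiVal] using add_nonneg hr0 this
      · have h2 : ∑ s', P h s (π h s) s' * epiVal P r π k (h + 1) s'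
            ≤ ∑ s', P h s (π h s) s' * (k : ℝ) := by
          refine Finset.sum_le_sum fun s' _ => ?_
          exact mul_le_mul_of_nonneg_left (ih (h + 1) s').2 (hP0 _ _ _ _)
        have h3 : ∑ s', P h s (π h s) s' * (k : ℝ) = (k : ℝ) := by
          rw [← Finset.sum_mul, hP1, one_mul]
        have := add_le_add hr1 (h2.trans h3.le)
        simpa [epiVal, Nat.cast_succ, add_comm] using this
      
lemma epiOcc_nonneg {S A : Type*} [Fintype S]
    (P : ℕ → S → A → S → ℝ)
    (hP0 : ∀ h s a s', 0 ≤ P h s a s')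
    (π : ℕ → S → A) (ρ : S → ℝ) (hρ0 : ∀ s, 0 ≤ ρ s) :
    ∀ h s, 0 ≤ epiOcc P π ρ h s := by
  intro h
  induction h with
  | zero => exact hρ0
  | succ h ih =>
      intro s'
      exact Finset.sum_nonneg fun s _ => mul_nonneg (ih s) (hP0 _ _ _ _)

lemma epiOcc_shift {S A : Type*} [Fintype S]
    (P : ℕ → S → A → S → ℝ) (π : ℕ → S → A) (ρ : S → ℝ) (h : ℕ) (f : S → ℝ) :
    ∑ s, epiOcc P π ρ h s * ∑ s', P h s (π h s) s' * f s'
      = ∑ s', epiOcc P π ρ (h + 1) s' * f s' := by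
  simp only [epiOcc, Finset.sum_mul, Finset.mul_sum, mul_assoc]
  exact Finset.sum_comm

/-- Performance difference bound in episodic MDPs with horizon `H` and rewards in
`[0,1]`: `J(π) - J(π̂) ≤ H² E_{s ∼ d_π}[1{π(s) ≠ π̂(s)}]`, where
`d_π(s) = (1/H) ∑_{h=1}^H P_h(s_h = s; π)`. -/
theorem perf_diff_episodic
    {S A : Type*} [Fintype S] [DecidableEq A]
    (H : ℕ) (hH : 0 < H)
    (P : ℕ → S → A → S → ℝ)
    (hP0 : ∀ h s a s', 0 ≤ P h s a s') (hP1 : ∀ h s a, ∑ s', P h s a s' = 1)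
    (r : ℕ → S → A → ℝ) (hr : ∀ h s a, r h s a ∈ Set.Icc (0 : ℝ) 1)
    (ρ : S → ℝ) (hρ0 : ∀ s, 0 ≤ ρ s) (hρ1 : ∑ s, ρ s = 1)
    (π πhat : ℕ → S → A) :
    ∑ s, ρ s * (epiVal P r π H 0 s - epiVal P r πhat H 0 s) ≤
      (H : ℝ) ^ 2 * ((H : ℝ)⁻¹ * ∑ h ∈ range H, ∑ s,
        epiOcc P π ρ h s * (if π h s = πhat h s then 0 else 1)) := by
  set ind : ℕ → S → ℝ := fun h s => if π h s = πhat h s then 0 else 1 with hind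
  have hind_nonneg : ∀ h s, 0 ≤ ind h s := by
    intro h s; simp only [hind]; split <;> norm_num
  have hocc := epiOcc_nonneg P hP0 π ρ hρ0
  have key : ∀ n h, ∑ s, epiOcc P π ρ h s *
        (epiVal P r π n h s - epiVal P r πhat n h s)
      ≤ (n : ℝ) * ∑ j ∈ range n, ∑ s, epiOcc P π ρ (h + j) s * ind (h + j) s := by
    intro n
    induction n with
    | zero => intro h; simp [epiVal]
    | succ n ih =>
        intro h
        set B : S → ℝ := fun s =>
          (r h s (π h s) + ∑ s', P h s (π h s) s' * epiVal P r πhat n (h + 1) s')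
            - epiVal P r πhat (n + 1) h s with hB
        have expand : ∑ s, epiOcc P π ρ h s *
              (epiVal P r π (n + 1) h s - epiVal P r πhat (n + 1) h s)
            = (∑ s, epiOcc P π ρ h s * B s)
              + ∑ s, epiOcc P π ρ h s * ∑ s', P h s (π h s) s' *
                  (epiVal P r π n (h + 1) s' - epiVal P r πhat n (h + 1) s') := by
          rw [← Finset.sum_add_distrib]
          refine Finset.sum_congr rfl fun s _ => ?_
          have : ∑ s', P h s (π h s) s' *
                (epiVal P r π n (h + 1) s' - epiVal P r πhat n (h + 1) s')
              = (∑ s', P h s (π h s) s' * epiVal P r π n (h + 1) s')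
                - ∑ s', P h s (π h s) s' * epiVal P r πhat n (h + 1) s' := by
            rw [← Finset.sum_sub_distrib]
            exact Finset.sum_congr rfl fun s' _ => by ring
          rw [this, hB]
          show epiOcc P π ρ h s * (epiVal P r π (n+1) h s - epiVal P r πhat (n+1) h s) = _
          simp only [epiVal]
          ring
        have hBle : ∀ s, B s ≤ ((n : ℝ) + 1) * ind h s := by
          intro s
          by_cases hc : π h s = πhat h s
          · have : B s = 0 := by
              simp only [hB, epiVal, hc]
              ring
            simp [this, hind, hc]
          · have h1 : r h s (π h s) ≤ 1 := (hr h s (π h s)).2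
            have h2 : ∑ s', P h s (π h s) s' * epiVal P r πhat n (h + 1) s' ≤ (n : ℝ) := by
              calc ∑ s', P h s (π h s) s' * epiVal P r πhat n (h + 1) s'
                  ≤ ∑ s', P h s (π h s) s' * (n : ℝ) :=
                    Finset.sum_le_sum fun s' _ =>
                      mul_le_mul_of_nonneg_left
                        (epiVal_mem P hP0 hP1 r hr πhat n (h + 1) s').2 (hP0 _ _ _ _)
                _ = (n : ℝ) := by rw [← Finset.sum_mul, hP1, one_mul]
            have h3 : 0 ≤ epiVal P r πhat (n + 1) h s :=
              (epiVal_mem P hP0 hP1 r hr πhat (n + 1) h s).1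
            have : B s ≤ 1 + (n : ℝ) := by
              simp only [hB]; linarith
            simpa [hind, hc, add_comm] using this
        have term1 : ∑ s, epiOcc P π ρ h s * B s
            ≤ ((n : ℝ) + 1) * ∑ s, epiOcc P π ρ h s * ind h s := by
          rw [Finset.mul_sum]
          refine Finset.sum_le_sum fun s _ => ?_
          calc epiOcc P π ρ h s * B s
              ≤ epiOcc P π ρ h s * (((n : ℝ) + 1) * ind h s) :=
                mul_le_mul_of_nonneg_left (hBle s) (hocc h s)
            _ = ((n : ℝ) + 1) * (epiOcc P π ρ h s * ind h s) := by ring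
        have term2 : ∑ s, epiOcc P π ρ h s * ∑ s', P h s (π h s) s' *
              (epiVal P r π n (h + 1) s' - epiVal P r πhat n (h + 1) s')
            ≤ (n : ℝ) * ∑ j ∈ range n, ∑ s, epiOcc P π ρ (h + 1 + j) s * ind (h + 1 + j) s := by
          rw [epiOcc_shift]
          exact ih (h + 1)
        have reindex : ∑ j ∈ range (n + 1), ∑ s, epiOcc P π ρ (h + j) s * ind (h + j) s
            = (∑ s, epiOcc P π ρ h s * ind h s)
              + ∑ j ∈ range n, ∑ s, epiOcc P π ρ (h + 1 + j) s * ind (h + 1 + j) s := by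
          rw [Finset.sum_range_succ', add_comm]
          simp only [Nat.add_zero]
          congr 1
          refine Finset.sum_congr rfl fun j _ => ?_
          rw [show h + (j + 1) = h + 1 + j from by ring]
        have hrest : 0 ≤ ∑ j ∈ range n, ∑ s, epiOcc P π ρ (h + 1 + j) s * ind (h + 1 + j) s :=
          Finset.sum_nonneg fun j _ => Finset.sum_nonneg fun s _ =>
            mul_nonneg (hocc _ s) (hind_nonneg _ s)
        rw [expand]
        push_cast
        rw [reindex]
        have hstep : (n : ℝ) * ∑ j ∈ range n, ∑ s, epiOcc P π ρ (h + 1 + j) s * ind (h + 1 + j) s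
            ≤ ((n : ℝ) + 1) * ∑ j ∈ range n, ∑ s, epiOcc P π ρ (h + 1 + j) s * ind (h + 1 + j) s :=
          mul_le_mul_of_nonneg_right (by linarith [Nat.cast_nonneg (α := ℝ) n]) hrest
        calc _ ≤ ((n : ℝ) + 1) * (∑ s, epiOcc P π ρ h s * ind h s)
              + ((n : ℝ) + 1) * ∑ j ∈ range n, ∑ s, epiOcc P π ρ (h + 1 + j) s * ind (h + 1 + j) s :=
            add_le_add term1 (term2.trans hstep)
          _ = _ := by ring
  have hmain := key H 0
  have hρocc : ∀ s, epiOcc P π ρ 0 s = ρ s := fun s => rfl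
  have hlhs : ∑ s, ρ s * (epiVal P r π H 0 s - epiVal P r πhat H 0 s)
      = ∑ s, epiOcc P π ρ 0 s * (epiVal P r π H 0 s - epiVal P r πhat H 0 s) := rfl
  have hidx : ∀ j, (0 : ℕ) + j = j := fun j => Nat.zero_add j
  have hH' : (H : ℝ) ≠ 0 := Nat.cast_ne_zero.mpr hH.ne'
  have hrhs : (H : ℝ) ^ 2 * ((H : ℝ)⁻¹ * ∑ h ∈ range H, ∑ s,
        epiOcc P π ρ h s * ind h s)
      = (H : ℝ) * ∑ j ∈ range H, ∑ s, epiOcc P π ρ (0 + j) s * ind (0 + j) s := by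
    simp only [Nat.zero_add]
    field_simp
  rw [hlhs, hrhs]
  exact hmain
end

section
/- In an episodic MDP, on the clean event E = { |r(s,a) + P_{s,a}·V̂_{h+1} − r̂(s,a) − P̂_{s,a}·V̂_{h+1}| ≤ b_h(s,a) for all h, s ∈ S_h, a }, the model error ι_h(s,a) := (T_h V̂_{h+1})(s,a) − Q̂_h(s,a), where Q̂_h(s,a) = r̂(s,a) − b_h(s,a) + P̂_{s,a}·V̂_{h+1}, satisfies 0 ≤ ι_h(s,a) ≤ 2 b_h(s,a) for all s, a, h; consequently for any policy π, J(π) − J(π̂) ≤ 2H · E_{(s,a)∼d^π}[ b(s,a) ], where π̂ is greedy with respect to Q̂_h at each level. -/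
open Finset

/-- Episodic VI-LCB: on the clean event, the model error
`ι_h(s,a) = (T_h V̂_{h+1})(s,a) - Q̂_h(s,a)` satisfies `0 ≤ ι_h(s,a) ≤ 2 b_h(s,a)`, and
consequently for any policy `π`, `J(π) - J(π̂) ≤ 2H E_{(s,a) ∼ d^π}[b(s,a)]`, where `π̂`
is the greedy policy with respect to `Q̂`. -/
theorem episodic_lcb_value_difference
    {S A : Type*} [Fintype S] [Fintype A]
    (H : ℕ) (hH : 0 < H)
    (P Phat : ℕ → S → A → S → ℝ)
    (hP0 : ∀ h s a s', 0 ≤ P h s a s') (hP1 : ∀ h s a, ∑ s', P h s a s' = 1)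
    (hPhat0 : ∀ h s a s', 0 ≤ Phat h s a s') (hPhat1 : ∀ h s a, ∑ s', Phat h s a s' = 1)
    (r rhat : ℕ → S → A → ℝ) (hr : ∀ h s a, r h s a ∈ Set.Icc (0 : ℝ) 1)
    (b : ℕ → S → A → ℝ) (hb : ∀ h s a, 0 ≤ b h s a)
    (ρ : S → ℝ) (hρ0 : ∀ s, 0 ≤ ρ s) (hρ1 : ∑ s, ρ s = 1)
    (Vhat : ℕ → S → ℝ) (Qhat : ℕ → S → A → ℝ) (πhat : ℕ → S → A)
    -- V̂_{H+1} = 0 (levels are `0, …, H-1` here, so the terminal value is at level `H`)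
    (hVhatH : ∀ s, Vhat H s = 0)
    -- Q̂_h(s,a) = r̂(s,a) - b_h(s,a) + P̂_{s,a} · V̂_{h+1}
    (hQhat : ∀ h, h < H → ∀ s a,
      Qhat h s a = rhat h s a - b h s a + ∑ s', Phat h s a s' * Vhat (h + 1) s')
    -- V̂_h(s) = max_a Q̂_h(s,a), attained by the greedy policy π̂
    (hVhat : ∀ h, h < H → ∀ s, Vhat h s = Qhat h s (πhat h s))
    (hgreedy : ∀ h, h < H → ∀ s a, Qhat h s a ≤ Qhat h s (πhat h s))
    -- the clean event
    (hclean : ∀ h, h < H → ∀ s a,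
      |r h s a + (∑ s', P h s a s' * Vhat (h + 1) s') - rhat h s a
        - ∑ s', Phat h s a s' * Vhat (h + 1) s'| ≤ b h s a)
    (π : ℕ → S → A) :
    (∀ h, h < H → ∀ s a,
      0 ≤ r h s a + (∑ s', P h s a s' * Vhat (h + 1) s') - Qhat h s a ∧
      r h s a + (∑ s', P h s a s' * Vhat (h + 1) s') - Qhat h s a ≤ 2 * b h s a) ∧
    ∑ s, ρ s * (epiVal P r π H 0 s - epiVal P r πhat H 0 s) ≤
      2 * (H : ℝ) * ((H : ℝ)⁻¹ * ∑ h ∈ range H, ∑ s,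
        epiOcc P π ρ h s * b h s (π h s)) := by
  have key1 : ∀ h, h < H → ∀ s a,
      0 ≤ r h s a + (∑ s', P h s a s' * Vhat (h + 1) s') - Qhat h s a ∧
      r h s a + (∑ s', P h s a s' * Vhat (h + 1) s') - Qhat h s a ≤ 2 * b h s a := by
    intro h hh s a
    have hc := hclean h hh s a
    rw [abs_le] at hc
    rw [hQhat h hh s a]
    constructor <;> linarith [hc.1, hc.2]
  have lem2 : ∀ k h, k + h = H → ∀ s, Vhat h s ≤ epiVal P r πhat k h s := by
    intro k
    induction k with
    | zero =>
      intro h hkh s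
      have : h = H := by omega
      subst this
      simp [epiVal, hVhatH s]
    | succ k ih =>
      intro h hkh s
      have hh : h < H := by omega
      have h1 := (key1 h hh s (πhat h s)).1
      have h2 : ∑ s', P h s (πhat h s) s' * Vhat (h+1) s' ≤
          ∑ s', P h s (πhat h s) s' * epiVal P r πhat k (h+1) s' :=
        Finset.sum_le_sum fun s' _ =>
          mul_le_mul_of_nonneg_left (ih (h+1) (by omega) s') (hP0 h s (πhat h s) s')
      rw [hVhat h hh s]
      simp only [epiVal]
      linarith
  have lem3 : ∀ k h, k + h = H → ∀ s,
      epiVal P r π k h s - Vhat h s ≤ epiVal P (fun h s a => 2 * b h s a) π k h s := by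
    intro k
    induction k with
    | zero =>
      intro h hkh s
      have : h = H := by omega
      subst this
      simp [epiVal, hVhatH s]
    | succ k ih =>
      intro h hkh s
      have hh : h < H := by omega
      have hA : Qhat h s (π h s) ≤ Vhat h s := by
        rw [hVhat h hh s]; exact hgreedy h hh s (π h s)
      have hB := (key1 h hh s (π h s)).2
      have hC : ∑ s', P h s (π h s) s' * epiVal P r π k (h+1) s' ≤
          (∑ s', P h s (π h s) s' * Vhat (h+1) s') +
          ∑ s', P h s (π h s) s' * epiVal P (fun h s a => 2 * b h s a) π k (h+1) s' := by
        rw [← Finset.sum_add_distrib]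
        refine Finset.sum_le_sum fun s' _ => ?_
        have := mul_le_mul_of_nonneg_left (ih (h+1) (by omega) s') (hP0 h s (π h s) s')
        rw [mul_sub] at this
        linarith
      simp only [epiVal]
      linarith
  have lem4 : ∀ k h, ∑ s, epiOcc P π ρ h s * epiVal P (fun h s a => 2 * b h s a) π k h s =
      ∑ j ∈ range k, ∑ s, epiOcc P π ρ (h + j) s * (2 * b (h + j) s (π (h + j) s)) := by
    intro k
    induction k with
    | zero => intro h; simp [epiVal]
    | succ k ih =>
      intro h
      have step : ∑ s, epiOcc P π ρ h s *
          (∑ s', P h s (π h s) s' * epiVal P (fun h s a => 2 * b h s a) π k (h+1) s') =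
          ∑ s', epiOcc P π ρ (h+1) s' * epiVal P (fun h s a => 2 * b h s a) π k (h+1) s' := by
        simp only [epiOcc, Finset.sum_mul, Finset.mul_sum]
        rw [Finset.sum_comm]
        exact Finset.sum_congr rfl fun s _ => Finset.sum_congr rfl fun s' _ => by ring
      simp only [epiVal, mul_add, Finset.sum_add_distrib, step, ih (h+1)]
      rw [Finset.sum_range_succ' (fun j => ∑ s, epiOcc P π ρ (h + j) s *
        (2 * b (h + j) s (π (h + j) s))) k]
      simp only [add_zero]
      rw [add_comm]
      congr 1
      exact Finset.sum_congr rfl fun j _ => by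
        rw [show h + 1 + j = h + (j + 1) from by omega]
  refine ⟨key1, ?_⟩
  have hHne : (H : ℝ) ≠ 0 := Nat.cast_ne_zero.mpr hH.ne'
  have main : ∑ s, ρ s * (epiVal P r π H 0 s - epiVal P r πhat H 0 s) ≤
      ∑ j ∈ range H, ∑ s, epiOcc P π ρ j s * (2 * b j s (π j s)) := by
    have := lem4 H 0
    simp only [zero_add] at this
    rw [← this]
    have hocc0 : epiOcc P π ρ 0 = ρ := rfl
    rw [hocc0]
    refine Finset.sum_le_sum fun s _ => ?_
    have h2 := lem2 H 0 (by omega) s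
    have h3 := lem3 H 0 (by omega) s
    have : epiVal P r π H 0 s - epiVal P r πhat H 0 s ≤
        epiVal P (fun h s a => 2 * b h s a) π H 0 s := by linarith
    exact mul_le_mul_of_nonneg_left this (hρ0 s)
  calc ∑ s, ρ s * (epiVal P r π H 0 s - epiVal P r πhat H 0 s)
      ≤ ∑ j ∈ range H, ∑ s, epiOcc P π ρ j s * (2 * b j s (π j s)) := main
    _ = 2 * ∑ h ∈ range H, ∑ s, epiOcc P π ρ h s * b h s (π h s) := by
        rw [Finset.mul_sum]
        exact Finset.sum_congr rfl fun j _ => by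
          rw [Finset.mul_sum]
          exact Finset.sum_congr rfl fun s _ => by ring
    _ = 2 * (H : ℝ) * ((H : ℝ)⁻¹ * ∑ h ∈ range H, ∑ s,
        epiOcc P π ρ h s * b h s (π h s)) := by
        rw [mul_assoc 2 (H : ℝ), mul_inv_cancel_left₀ hHne]
end

section
/- Consider the two-point bandit lower bound construction: two arms with μ(2) = 1/C* and μ(1) = 1 − 1/C* for C* ≥ 2, and Bernoulli rewards with means f₁ = (1/2, 1/2−δ) and f₂ = (1/2, 1/2+δ) for δ ∈ (0,1/4]. Then the KL divergence between the joint distributions of one sample under (μ, f₁) and (μ, f₂) satisfies KL ≤ (1/C*)·(2δ)²/(1/4 − δ²) ≤ 200 δ²/C*; consequently, for N samples, any estimator â obeys sup over the two instances of E[r(a*) − r(â)] ≥ (δ/4)·exp(−200 N δ²/C*). -/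
open Finset

/-- Joint pmf of a single sample `(action, reward bit)` in the two-armed bandit
instance with action marginal `μ` and Bernoulli reward means `f`: the reward bit `1`
has probability `f a` and the bit `0` has probability `1 - f a`. -/
noncomputable def twoArmJoint (μ f : Fin 2 → ℝ) (p : Fin 2 × Fin 2) : ℝ :=
  μ p.1 * (if p.2 = 1 then f p.1 else 1 - f p.1)

/-- Le Cam core inequality: for two pmfs `p, q` on a finite type and any event `A`,
`P(A) + Q(Aᶜ)` is at least half the squared Hellinger affinity. -/
lemma lecam_core {X : Type*} [Fintype X] [DecidableEq X] (p q : X → ℝ) (hp : ∀ x, 0 ≤ p x)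
    (hq : ∀ x, 0 ≤ q x) (hp1 : ∑ x, p x = 1) (hq1 : ∑ x, q x = 1) (A : Finset X) :
    (∑ x, Real.sqrt (p x * q x)) ^ 2 / 2 ≤ (∑ x ∈ A, p x) + (∑ x ∈ Aᶜ, q x) := by
  have key : (∑ x, Real.sqrt (p x * q x)) ^ 2 ≤ (∑ x, min (p x) (q x)) * 2 := by
    have h1 : ∑ x, Real.sqrt (p x * q x)
        = ∑ x, Real.sqrt (min (p x) (q x)) * Real.sqrt (max (p x) (q x)) := by
      refine Finset.sum_congr rfl fun x _ => ?_
      rw [← Real.sqrt_mul (le_min (hp x) (hq x)), min_mul_max]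
    have h2 := Real.sum_sqrt_mul_sqrt_le (univ : Finset X)
      (f := fun x => min (p x) (q x)) (g := fun x => max (p x) (q x))
      (fun x => le_min (hp x) (hq x)) (fun x => le_max_of_le_left (hp x))
    have hmaxle : ∑ x, max (p x) (q x) ≤ 2 := by
      calc ∑ x, max (p x) (q x) ≤ ∑ x, (p x + q x) :=
            Finset.sum_le_sum fun x _ => max_le (le_add_of_nonneg_right (hq x))
              (le_add_of_nonneg_left (hp x))
        _ = 2 := by rw [Finset.sum_add_distrib, hp1, hq1]; norm_num
    have hminnn : (0:ℝ) ≤ ∑ x, min (p x) (q x) :=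
      Finset.sum_nonneg fun x _ => le_min (hp x) (hq x)
    calc (∑ x, Real.sqrt (p x * q x)) ^ 2
        ≤ (Real.sqrt (∑ x, min (p x) (q x)) * Real.sqrt (∑ x, max (p x) (q x))) ^ 2 := by
          apply pow_le_pow_left₀ (Finset.sum_nonneg fun x _ => Real.sqrt_nonneg _)
          rw [h1]; exact h2
      _ = (∑ x, min (p x) (q x)) * (∑ x, max (p x) (q x)) := by
          rw [mul_pow, Real.sq_sqrt hminnn, Real.sq_sqrt
            (le_trans hminnn (Finset.sum_le_sum fun x _ => min_le_max))]
      _ ≤ (∑ x, min (p x) (q x)) * 2 := by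
          exact mul_le_mul_of_nonneg_left hmaxle hminnn
  have hsplit : ∑ x, min (p x) (q x) ≤ (∑ x ∈ A, p x) + (∑ x ∈ Aᶜ, q x) := by
    rw [← Finset.sum_add_sum_compl A (fun x => min (p x) (q x))]
    gcongr with x hx
    · exact min_le_left _ _
    · exact min_le_right _ _
  linarith [key]

/-- Square root of a finite product of nonnegative reals. -/
lemma sqrt_prod' {ι : Type*} (s : Finset ι) (g : ι → ℝ) (hg : ∀ i, 0 ≤ g i) :
    Real.sqrt (∏ i ∈ s, g i) = ∏ i ∈ s, Real.sqrt (g i) := by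
  induction s using Finset.cons_induction with
  | empty => simp
  | cons a s ha ih => rw [Finset.prod_cons, Finset.prod_cons, Real.sqrt_mul (hg a), ih]

set_option maxHeartbeats 2000000 in
/-- Le Cam two-point lower bound construction for offline bandits with `C* ≥ 2`:
arms `0` (played with probability `1 - 1/C*`) and `1` (played with probability `1/C*`),
reward means `f₁ = (1/2, 1/2-δ)` and `f₂ = (1/2, 1/2+δ)`. The single-sample KL
divergence is at most `(1/C*)(2δ)²/(1/4-δ²) ≤ 200δ²/C*`, and every estimator `â`
based on `N` i.i.d. samples has worst-case risk at least `(δ/4) exp(-200Nδ²/C*)`. -/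
theorem lecam_two_point_bandit
    (C δ : ℝ) (hC : 2 ≤ C) (hδ0 : 0 < δ) (hδ1 : δ ≤ 1 / 4) (N : ℕ) :
    let μ : Fin 2 → ℝ := ![1 - 1 / C, 1 / C]
    let f₁ : Fin 2 → ℝ := ![1 / 2, 1 / 2 - δ]
    let f₂ : Fin 2 → ℝ := ![1 / 2, 1 / 2 + δ]
    (∑ p : Fin 2 × Fin 2,
        twoArmJoint μ f₁ p * Real.log (twoArmJoint μ f₁ p / twoArmJoint μ f₂ p)
      ≤ (1 / C) * (2 * δ) ^ 2 / (1 / 4 - δ ^ 2)) ∧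
    ((1 / C) * (2 * δ) ^ 2 / (1 / 4 - δ ^ 2) ≤ 200 * δ ^ 2 / C) ∧
    ∀ hatA : (Fin N → Fin 2 × Fin 2) → Fin 2,
      δ / 4 * Real.exp (-200 * (N : ℝ) * δ ^ 2 / C) ≤
        max
          (∑ d : Fin N → Fin 2 × Fin 2,
            (∏ i, twoArmJoint μ f₁ (d i)) * (f₁ 0 - f₁ (hatA d)))
          (∑ d : Fin N → Fin 2 × Fin 2,
            (∏ i, twoArmJoint μ f₂ (d i)) * (f₂ 1 - f₂ (hatA d))) := by
  intro μ f₁ f₂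
  have hC0 : (0:ℝ) < C := by linarith
  have h1C : 1/C ≤ 1/2 := by rw [div_le_div_iff₀ hC0] <;> linarith
  have h1C0 : (0:ℝ) < 1/C := by positivity
  have ha : (0:ℝ) < 1/2 - δ := by linarith
  have hb : (0:ℝ) < 1/2 + δ := by linarith
  have hCi : (C:ℝ)⁻¹ ≠ 0 := by positivity
  refine ⟨?_, ?_, ?_⟩
  · -- part 1: KL bound
    have hμ0 : ((1:ℝ) - 1/C) * (1/2) ≠ 0 := by nlinarith
    simp only [Fintype.sum_prod_type, Fin.sum_univ_two, twoArmJoint, μ, f₁, f₂,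
      Matrix.cons_val_zero, Matrix.cons_val_one, Matrix.head_cons]
    norm_num
    have e1 : ((1-C⁻¹)*(1/2)) / ((1-C⁻¹)*(1/2)) = 1 :=
      div_self (by rw [one_div] at hμ0; exact hμ0)
    have e2 : C⁻¹*(1-(1/2-δ)) / (C⁻¹*(1-(1/2+δ))) = (1/2+δ)/(1/2-δ) := by
      rw [mul_div_mul_left _ _ hCi]; congr 1 <;> ring
    have e3 : C⁻¹*(1/2-δ) / (C⁻¹*(1/2+δ)) = (1/2-δ)/(1/2+δ) := mul_div_mul_left _ _ hCi
    rw [e2, e3, Real.log_div (ne_of_gt hb) (ne_of_gt ha),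
      Real.log_div (ne_of_gt ha) (ne_of_gt hb)]
    have hL : Real.log (1/2+δ) - Real.log (1/2-δ) ≤ 2*δ/((1/2-δ)*(1/2+δ)) := by
      have h1 : Real.log ((1/2+δ)/(1/2-δ)) ≤ (1/2+δ)/(1/2-δ) - 1 :=
        Real.log_le_sub_one_of_pos (by positivity)
      rw [Real.log_div (ne_of_gt hb) (ne_of_gt ha)] at h1
      have h2 : (1/2+δ)/(1/2-δ) - 1 = 2*δ/(1/2-δ) := by
        rw [div_sub_one (ne_of_gt ha)]; congr 1; ring
      have h3 : 2*δ/(1/2-δ) ≤ 2*δ/((1/2-δ)*(1/2+δ)) := by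
        apply div_le_div_of_nonneg_left (by linarith) (by positivity)
        nlinarith
      linarith
    have hD : 2*δ*(2*δ/((1/2-δ)*(1/2+δ))) = (2*δ)^2/(1/4-δ^2) := by
      rw [show (1/4:ℝ)-δ^2 = (1/2-δ)*(1/2+δ) by ring]; ring
    have hkey := mul_le_mul_of_nonneg_left hL (show (0:ℝ) ≤ C⁻¹*(2*δ) by positivity)
    rw [one_div]
    ring_nf at hkey hD ⊢
    nlinarith [hkey, hD]
  · -- part 2: 200 δ²/C bound
    have h34 : (0:ℝ) < 1/4 - δ^2 := by nlinarith
    rw [div_le_div_iff₀ h34 hC0]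
    have e : 1/C*(2*δ)^2*C = 4*δ^2 := by field_simp; ring
    have hδsq : δ^2 ≤ 1/16 := by nlinarith
    nlinarith [e, hδsq, sq_nonneg δ, mul_nonneg (sq_nonneg δ) (le_of_lt hδ0)]
  · -- part 3: Le Cam lower bound
    intro hatA
    set p : Fin 2 × Fin 2 → ℝ := twoArmJoint μ f₁ with hpdef
    set q : Fin 2 × Fin 2 → ℝ := twoArmJoint μ f₂ with hqdef
    have hCinvle : C⁻¹ ≤ 1/2 := by rw [← one_div]; exact h1C
    have hCinv0 : (0:ℝ) < C⁻¹ := by positivity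
    have hμnn : ∀ a : Fin 2, 0 ≤ μ a := by
      rw [Fin.forall_fin_two]
      constructor <;> simp [μ] <;> nlinarith
    have hf₁01 : ∀ a : Fin 2, 0 ≤ f₁ a ∧ f₁ a ≤ 1 := by
      rw [Fin.forall_fin_two]
      refine ⟨⟨?_, ?_⟩, ⟨?_, ?_⟩⟩ <;> simp [f₁] <;> linarith
    have hf₂01 : ∀ a : Fin 2, 0 ≤ f₂ a ∧ f₂ a ≤ 1 := by
      rw [Fin.forall_fin_two]
      refine ⟨⟨?_, ?_⟩, ⟨?_, ?_⟩⟩ <;> simp [f₂] <;> linarith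
    have hp : ∀ x, 0 ≤ p x := by
      intro x
      rw [hpdef]
      refine mul_nonneg (hμnn _) ?_
      split
      · exact (hf₁01 _).1
      · linarith [(hf₁01 x.1).2]
    have hq : ∀ x, 0 ≤ q x := by
      intro x
      rw [hqdef]
      refine mul_nonneg (hμnn _) ?_
      split
      · exact (hf₂01 _).1
      · linarith [(hf₂01 x.1).2]
    have hp1 : ∑ x, p x = 1 := by
      simp only [hpdef, Fintype.sum_prod_type, Fin.sum_univ_two, twoArmJoint, μ, f₁,
        Matrix.cons_val_zero, Matrix.cons_val_one, Matrix.head_cons]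
      norm_num; ring
    have hq1 : ∑ x, q x = 1 := by
      simp only [hqdef, Fintype.sum_prod_type, Fin.sum_univ_two, twoArmJoint, μ, f₂,
        Matrix.cons_val_zero, Matrix.cons_val_one, Matrix.head_cons]
      norm_num; ring
    have hρlb : 1 - 4*δ^2/C ≤ ∑ x : Fin 2 × Fin 2, Real.sqrt (p x * q x) := by
      simp only [hpdef, hqdef, Fintype.sum_prod_type, Fin.sum_univ_two, twoArmJoint, μ, f₁, f₂,
        Matrix.cons_val_zero, Matrix.cons_val_one, Matrix.head_cons, reduceIte,
        show ((0:Fin 2) = 1) = False from by decide, if_false]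
      have hδsq : δ^2 ≤ 1/16 := by nlinarith
      have h0 : (0:ℝ) ≤ (1 - 1/C) * (1/2) := by nlinarith
      have e1 : Real.sqrt ((1 - 1/C) * (1 - 1/2) * ((1 - 1/C) * (1 - 1/2)))
          = (1 - 1/C) * (1/2) := by
        rw [show (1 - 1/C) * (1 - 1/2) * ((1 - 1/C) * (1 - 1/2))
            = ((1 - 1/C) * (1/2)) * ((1 - 1/C) * (1/2)) from by ring,
          Real.sqrt_mul_self h0]
      have e2 : Real.sqrt ((1 - 1/C) * (1/2) * ((1 - 1/C) * (1/2))) = (1 - 1/C) * (1/2) :=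
        Real.sqrt_mul_self h0
      have base : (1/C * (1/2 - 2*δ^2))^2 ≤ 1/C * (1/2 - δ) * (1/C * (1/2 + δ)) := by
        have b0 : (1/2 - 2*δ^2)^2 ≤ 1/4 - δ^2 := by nlinarith
        calc (1/C * (1/2 - 2*δ^2))^2 = (1/C)^2 * ((1/2 - 2*δ^2)^2) := by ring
          _ ≤ (1/C)^2 * (1/4 - δ^2) := mul_le_mul_of_nonneg_left b0 (sq_nonneg _)
          _ = 1/C * (1/2 - δ) * (1/C * (1/2 + δ)) := by ring
      have k1 : 1/C * (1/2 - 2*δ^2) ≤ Real.sqrt (1/C * (1/2 - δ) * (1/C * (1/2 + δ))) :=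
        Real.le_sqrt_of_sq_le base
      have k2 : 1/C * (1/2 - 2*δ^2)
          ≤ Real.sqrt (1/C * (1 - (1/2 - δ)) * (1/C * (1 - (1/2 + δ)))) := by
        rw [show 1/C * (1 - (1/2 - δ)) * (1/C * (1 - (1/2 + δ)))
            = 1/C * (1/2 - δ) * (1/C * (1/2 + δ)) from by ring]
        exact k1
      rw [e1, e2]
      have hid : (1 - 1/C) * (1/2) + (1 - 1/C) * (1/2)
          + (1/C * (1/2 - 2*δ^2) + 1/C * (1/2 - 2*δ^2)) = 1 - 4*δ^2/C := by
        field_simp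
        ring
      linarith [k1, k2, hid]
    have hδsq : δ^2 ≤ 1/16 := by nlinarith
    set ρ := ∑ x : Fin 2 × Fin 2, Real.sqrt (p x * q x) with hρdef
    have hρ0 : 0 ≤ ρ := Finset.sum_nonneg fun x _ => Real.sqrt_nonneg _
    classical
    set A : Finset (Fin N → Fin 2 × Fin 2) := univ.filter (fun d => hatA d = 1) with hAdef
    have htwo : ∀ x : Fin 2, x = 0 ∨ x = 1 := by decide
    have hgap1 : ∀ x : Fin 2, f₁ 0 - f₁ x = if x = 1 then δ else 0 := by
      intro x
      rcases htwo x with h | h <;> subst h <;> simp [f₁] <;> ring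
    have hgap2 : ∀ x : Fin 2, f₂ 1 - f₂ x = if x = 1 then 0 else δ := by
      intro x
      rcases htwo x with h | h <;> subst h <;> simp [f₂] <;> ring
    have hr1 : ∑ d : Fin N → Fin 2 × Fin 2, (∏ i, p (d i)) * (f₁ 0 - f₁ (hatA d))
        = (∑ d ∈ A, ∏ i, p (d i)) * δ := by
      calc ∑ d : Fin N → Fin 2 × Fin 2, (∏ i, p (d i)) * (f₁ 0 - f₁ (hatA d))
          = ∑ d : Fin N → Fin 2 × Fin 2,
              (if hatA d = 1 then (∏ i, p (d i)) * δ else 0) := by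
            refine Finset.sum_congr rfl fun d _ => ?_
            rw [hgap1]
            split <;> simp
        _ = ∑ d ∈ A, (∏ i, p (d i)) * δ := (Finset.sum_filter _ _).symm
        _ = (∑ d ∈ A, ∏ i, p (d i)) * δ := by rw [Finset.sum_mul]
    have hr2 : ∑ d : Fin N → Fin 2 × Fin 2, (∏ i, q (d i)) * (f₂ 1 - f₂ (hatA d))
        = (∑ d ∈ Aᶜ, ∏ i, q (d i)) * δ := by
      calc ∑ d : Fin N → Fin 2 × Fin 2, (∏ i, q (d i)) * (f₂ 1 - f₂ (hatA d))
          = ∑ d : Fin N → Fin 2 × Fin 2,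
              (if ¬ hatA d = 1 then (∏ i, q (d i)) * δ else 0) := by
            refine Finset.sum_congr rfl fun d _ => ?_
            rw [hgap2]
            by_cases h : hatA d = 1 <;> simp [h]
        _ = ∑ d ∈ univ.filter (fun d => ¬ hatA d = 1), (∏ i, q (d i)) * δ :=
            (Finset.sum_filter _ _).symm
        _ = (∑ d ∈ Aᶜ, ∏ i, q (d i)) * δ := by
            rw [hAdef, Finset.compl_filter, Finset.sum_mul]
    have hP1 : ∑ d : Fin N → Fin 2 × Fin 2, ∏ i, p (d i) = 1 := by
      rw [← Fintype.piFinset_univ, Finset.sum_prod_piFinset]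
      simp [hp1]
    have hQ1 : ∑ d : Fin N → Fin 2 × Fin 2, ∏ i, q (d i) = 1 := by
      rw [← Fintype.piFinset_univ, Finset.sum_prod_piFinset]
      simp [hq1]
    have hPnn : ∀ d : Fin N → Fin 2 × Fin 2, 0 ≤ ∏ i, p (d i) :=
      fun d => Finset.prod_nonneg fun i _ => hp _
    have hQnn : ∀ d : Fin N → Fin 2 × Fin 2, 0 ≤ ∏ i, q (d i) :=
      fun d => Finset.prod_nonneg fun i _ => hq _
    have core := lecam_core (fun d : Fin N → Fin 2 × Fin 2 => ∏ i, p (d i))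
      (fun d => ∏ i, q (d i)) hPnn hQnn hP1 hQ1 A
    have haff : ∑ d : Fin N → Fin 2 × Fin 2,
        Real.sqrt ((∏ i, p (d i)) * ∏ i, q (d i)) = ρ ^ N := by
      have h1 : ∀ d : Fin N → Fin 2 × Fin 2,
          Real.sqrt ((∏ i, p (d i)) * ∏ i, q (d i))
            = ∏ i, Real.sqrt (p (d i) * q (d i)) := fun d => by
        rw [← Finset.prod_mul_distrib, sqrt_prod' _ _ (fun i => mul_nonneg (hp _) (hq _))]
      rw [Finset.sum_congr rfl fun d _ => h1 d, hρdef, Finset.sum_pow',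
        Fintype.piFinset_univ]
    rw [haff] at core
    have ht : δ^2/C ≤ 1/32 := by rw [div_le_iff₀ hC0]; nlinarith
    have ht0 : (0:ℝ) ≤ δ^2/C := by positivity
    have hexp1 : Real.exp (-(100*(δ^2/C))) ≤ 1/(1+100*(δ^2/C)) := by
      rw [Real.exp_neg, one_div]
      exact inv_anti₀ (by linarith)
        (by linarith [Real.add_one_le_exp (100*(δ^2/C))])
    have hexp2 : 1/(1+100*(δ^2/C)) ≤ 1 - 4*δ^2/C := by
      rw [div_le_iff₀ (by linarith)]
      have hid2 : 4*δ^2/C = 4*(δ^2/C) := by ring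
      rw [hid2]
      nlinarith [ht, ht0, mul_le_mul_of_nonneg_left ht ht0]
    have hexpρ : Real.exp (-(100*(δ^2/C))) ≤ ρ := by
      linarith [hexp1, hexp2, hρlb]
    have hexpN : Real.exp (-200 * (N:ℝ) * δ^2 / C) ≤ (ρ^N)^2 := by
      have e : Real.exp (-200 * (N:ℝ) * δ^2 / C)
          = (Real.exp (-(100*(δ^2/C))))^(2*N) := by
        rw [← Real.exp_nat_mul]; congr 1; push_cast; ring
      rw [e]
      calc (Real.exp (-(100*(δ^2/C))))^(2*N) ≤ ρ^(2*N) :=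
            pow_le_pow_left₀ (Real.exp_nonneg _) hexpρ _
        _ = (ρ^N)^2 := by rw [← pow_mul, mul_comm]
    rw [hr1, hr2]
    have hmul1 := mul_le_mul_of_nonneg_left hexpN (show (0:ℝ) ≤ δ/4 by positivity)
    have hmul2 := mul_le_mul_of_nonneg_left core (le_of_lt hδ0)
    linarith [le_max_left ((∑ d ∈ A, ∏ i, p (d i)) * δ) ((∑ d ∈ Aᶜ, ∏ i, q (d i)) * δ),
      le_max_right ((∑ d ∈ A, ∏ i, p (d i)) * δ) ((∑ d ∈ Aᶜ, ∏ i, q (d i)) * δ),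
      hmul1, hmul2]
end
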